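/- arXiv:1611.04014 — 6 statements merged into one kernel-verified Lean document; each statement's English description precedes it below -/
import Mathlib

section
/- For every word u over the positive integers, the reversal of u is Wilf equivalent to u; that is, the weight generating function F(u;t,x) = Σ_{w ≥ u} t^{|w|} x^{‖w‖} (summed over words w into which u embeds under the generalized factor order) equals F(ũ;t,x), where ũ is the reversal of u. -/
/-! Reversal is a length- and height-preserving involution of words which carries an occurrence
of `u` in `w` to an occurrence of `ũ` in `w̃`; hence it maps the words `w ≥ u` of each length and
height bijectively onto the words `w ≥ ũ` of the same length and height. -/

abbrev Word := List ℕ+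

/-- Height (letter-sum) of a word. -/
def ht (w : Word) : ℕ := (w.map (fun x => (x : ℕ))).sum

/-- Embedding index set of `u` into `w` (1-based positions). -/
def Em (u w : Word) : Set ℕ :=
  {j | 1 ≤ j ∧ j - 1 + u.length ≤ w.length ∧
    ∀ k, k < u.length → u.getD k 1 ≤ w.getD (j - 1 + k) 1}

/-- Super-strong Wilf equivalence. -/
def SSWilf (u v : Word) : Prop :=
  ∃ f : Word → Word, Function.Bijective f ∧
    (∀ w, (f w).length = w.length ∧ ht (f w) = ht w) ∧
    (∀ w, Em u w = Em v (f w))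

/-- `w` is a permutation of `[n]`. -/
def IsPerm (n : ℕ) (w : Word) : Prop :=
  w.length = n ∧ ∀ k : ℕ, 1 ≤ k → k ≤ n → (w.map (fun x => (x : ℕ))).count k = 1

/-- 1-based position of the letter `k` in `u`. -/
def pos (u : Word) (k : ℕ) : ℕ := (u.map (fun x => (x : ℕ))).idxOf k + 1

/-- `E` is an embedding set satisfying the overlap condition for words of length `n`. -/
def IsEmbSet (n : ℕ) (E : Finset ℕ) : Prop :=
  1 ∈ E ∧ (∀ a ∈ E, 1 ≤ a) ∧
  ∀ a ∈ E, (∀ b ∈ E, b ≤ a) ∨ ∃ b ∈ E, a < b ∧ b ≤ a + (n - 1)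

/-- The letter at (1-based) position `p` of the (pre-)cluster of `u` on `E`. -/
def clusterAt (u : Word) (E : Finset ℕ) (p : ℕ) : ℕ+ :=
  (E.sup (fun a => if a ≤ p ∧ p < a + u.length then ((u.getD (p - a) 1 : ℕ+) : ℕ) else 1)).toPNat'

/-- The minimal cluster of `u` with embedding set `E`. -/
def mcluster (u : Word) (E : Finset ℕ) : Word :=
  (List.range (E.sup id - 1 + u.length)).map (fun j => clusterAt u E (j + 1))

/-- The extended minimal cluster of `u` on `E` with prescribed length `n`. -/
def extCluster (u : Word) (E : Finset ℕ) (n : ℕ) : Word :=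
  (List.range n).map (fun j => clusterAt u E (j + 1))

/-- The multiset `i⁺(u)` of distances from the letter `i` to larger letters. -/
def iplus (n : ℕ) (u : Word) (i : ℕ) : Multiset ℕ :=
  (Multiset.Icc (i + 1) n).map (fun j => Nat.dist (pos u i) (pos u j))

/-- Cross equivalence of permutations of `[n]`. -/
def CrossEq (n : ℕ) (u v : Word) : Prop :=
  ∀ i, 1 ≤ i → i ≤ n - 1 → iplus n u i = iplus n v i

/-- Increasing list of (1-based) positions in `u` of the letters `≥ i`. -/
def posList (u : Word) (i : ℕ) : List ℕ :=
  ((List.range u.length).filter (fun k => i ≤ ((u.getD k 1 : ℕ+) : ℕ))).map (· + 1)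

/-- `Δᵢ(u⁻¹)`: consecutive differences of positions of letters `≥ i` in `u`. -/
def Delta (u : Word) (i : ℕ) : List ℕ :=
  List.zipWith (fun a b => b - a) (posList u i) (posList u i).tail

/-- Shift `(p-1) + E` of an embedding set. -/
def shiftSet (p : ℕ) (E : Finset ℕ) : Finset ℕ := E.image (fun e => p - 1 + e)

lemma ht_reverse (w : Word) : ht w.reverse = ht w := by
  -- `ht` elaborates with `w` coerced to `List ℕ` through the list monad, a `flatMap`
  simp only [ht, List.map_id', List.bind_eq_flatMap, List.pure_def, ← List.map_eq_flatMap,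
    List.map_reverse, List.sum_reverse]

lemma reverse_mem_Em_reverse {u w : Word} {j : ℕ} (hj : j ∈ Em u w) :
    w.length - u.length - (j - 1) + 1 ∈ Em u.reverse w.reverse := by
  obtain ⟨hj_pos, hj_fits, hj_le⟩ := hj
  refine ⟨Nat.le_add_left _ _, by simp only [List.length_reverse]; omega, ?_⟩
  intro k hk
  rw [List.length_reverse] at hk
  have hw : w.length - u.length - (j - 1) + 1 - 1 + k < w.length := by omega
  have hidx : w.length - 1 - (w.length - u.length - (j - 1) + 1 - 1 + k)
      = j - 1 + (u.length - 1 - k) := by omega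
  rw [List.getD_eq_getElem _ _ (by simpa using hk), List.getD_eq_getElem _ _ (by simpa using hw),
    List.getElem_reverse, List.getElem_reverse, ← List.getD_eq_getElem _ 1,
    ← List.getD_eq_getElem _ 1, hidx]
  exact hj_le _ (by omega)

lemma Em_nonempty_iff_reverse (u w : Word) :
    (Em u w).Nonempty ↔ (Em u.reverse w.reverse).Nonempty := by
  refine ⟨fun ⟨_, hj⟩ => ⟨_, reverse_mem_Em_reverse hj⟩, fun ⟨_, hj⟩ => ?_⟩
  have hj' := reverse_mem_Em_reverse hj
  rw [List.reverse_reverse, List.reverse_reverse] at hj'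
  exact ⟨_, hj'⟩

/-- `u` is Wilf equivalent to its reversal: the weight generating
functions agree, i.e. they have the same coefficients: for all lengths `n` and
heights `m`, the number of words `w ≥ u` of length `n` and height `m` equals the
number of words `w ≥ ũ` of length `n` and height `m`. -/
theorem reverse_wilf_equivalent (u : Word) (n m : ℕ) :
    {w : Word | w.length = n ∧ ht w = m ∧ (Em u w).Nonempty}.ncard =
    {w : Word | w.length = n ∧ ht w = m ∧ (Em u.reverse w).Nonempty}.ncard := by
  rw [← Set.ncard_image_of_injective _ List.reverse_injective,
    List.reverse_involutive.image_eq_preimage_symm]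
  congr 1
  ext w
  simp only [Set.mem_preimage, Set.mem_ofPred_eq, List.length_reverse, ht_reverse,
    Em_nonempty_iff_reverse u w.reverse, List.reverse_reverse]
end

section
/- If u and v are words over the positive integers with u super-strongly Wilf equivalent to v, then 1u is super-strongly Wilf equivalent to 1v, 1u is super-strongly Wilf equivalent to v1, and u⁺ is super-strongly Wilf equivalent to v⁺ (where u⁺ increments every letter of u by 1). -/
/-!
A letter 1 is dominated by every letter, so a leading 1 in the pattern, or a trailing 1, only
shifts embedding indices by one; rotating `f w` by one position realises this shift for `v1`.
For `u⁺` no occurrence can cover a letter 1 of `w`, so `Em(u⁺, w)` is the union of the shifted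
sets `Em(u⁺, B)` over the maximal 1-free blocks `B` of `w`. Applying `f`, conjugated by
decrementing the letters, to every block separately gives the bijection for `u⁺ ∼ₛₛ v⁺`.
-/

open Function

theorem List.notMem_of_mem_splitOn {α : Type*} [BEq α] [LawfulBEq α] {a : α} {xs l : List α}
    (hl : l ∈ xs.splitOn a) : a ∉ l := by
  induction xs generalizing l with
  | nil => simp_all [List.splitOn_nil]
  | cons x xs ih =>
    rw [List.splitOn_cons_eq_if_modifyHead] at hl
    split_ifs at hl with hx
    · rcases List.mem_cons.1 hl with rfl | hl
      · exact List.not_mem_nil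
      · exact ih hl
    · obtain ⟨l₀, ls, hsplit⟩ := List.exists_cons_of_ne_nil (List.splitOn_ne_nil a xs)
      rw [hsplit, List.modifyHead_cons] at hl
      rcases List.mem_cons.1 hl with rfl | hl
      · simp only [beq_iff_eq] at hx
        exact List.not_mem_cons_of_ne_of_not_mem (Ne.symm hx) (ih (hsplit ▸ List.mem_cons_self))
      · exact ih (hsplit ▸ List.mem_cons_of_mem _ hl)

theorem List.Forall₂.intercalate {α β : Type*} {R : List α → List β → Prop} {s : List α}
    {t : List β} (hsep : ∀ a a' b b', R a a' → R b b' → R (a ++ s ++ b) (a' ++ t ++ b'))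
    (hnil : R [] []) {L : List (List α)} {L' : List (List β)} (h : List.Forall₂ R L L') :
    R (s.intercalate L) (t.intercalate L') := by
  induction h with
  | nil => exact hnil
  | cons hab h ih =>
    cases h with
    | nil => simpa using hab
    | cons _ _ =>
      rw [List.intercalate_cons_cons, List.intercalate_cons_cons]
      exact hsep _ _ _ _ hab ih

theorem one_notMem_map_add_one (w : Word) : 1 ∉ w.map (· + 1) := by
  simp only [List.mem_map, not_exists, not_and]
  intro a _ ha
  exact absurd (PNat.coe_inj.2 ha) (by simp)

theorem one_lt_of_mem_map_add_one {w : Word} {x : ℕ+} (hx : x ∈ w.map (· + 1)) : 1 < x := by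
  obtain ⟨a, -, rfl⟩ := List.mem_map.1 hx
  exact PNat.lt_add_left 1 a

theorem map_add_one_map_sub_one {w : Word} (hw : 1 ∉ w) : (w.map (· - 1)).map (· + 1) = w := by
  rw [List.map_map]
  refine (List.map_congr_left fun a ha => ?_).trans (List.map_id w)
  exact PNat.sub_add_of_lt (Ne.lt_of_le (fun h => hw (h ▸ ha)) one_le)

theorem map_sub_one_map_add_one (w : Word) : (w.map (· + 1)).map (· - 1) = w := by
  simp [List.map_map, Function.comp_def, PNat.add_sub]

theorem ht_cons (a : ℕ+) (w : Word) : ht (a :: w) = a + ht w := by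
  simp [ht]

theorem ht_append (w₁ w₂ : Word) : ht (w₁ ++ w₂) = ht w₁ + ht w₂ := by
  simp [ht]

theorem ht_rotate (w : Word) (n : ℕ) : ht (w.rotate n) = ht w := by
  simpa [ht] using
    (List.Perm.flatMap_right (fun a : ℕ+ => [(a : ℕ)]) (w.rotate_perm n)).sum_eq

theorem ht_map_add_one (w : Word) : ht (w.map (· + 1)) = ht w + w.length := by
  induction w with
  | nil => rfl
  | cons a w ih =>
    rw [List.map_cons, ht_cons, ht_cons, ih, PNat.add_coe, PNat.one_coe, List.length_cons]
    ring

theorem Em_cons_one (u w : Word) : Em (1 :: u) w = {j | 1 ≤ j ∧ j + 1 ∈ Em u w} := by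
  ext j
  simp only [Em, Set.mem_ofPred_eq, List.length_cons]
  constructor
  · rintro ⟨hj, hlen, hdom⟩
    refine ⟨hj, by omega, by omega, fun k hk => ?_⟩
    have hle := hdom (k + 1) (by omega)
    rwa [show j - 1 + (k + 1) = j + 1 - 1 + k by omega, List.getD_cons_succ] at hle
  · rintro ⟨hj, -, hlen, hdom⟩
    refine ⟨hj, by omega, fun k hk => ?_⟩
    cases k with
    | zero => exact one_le
    | succ k =>
      rw [List.getD_cons_succ, show j - 1 + (k + 1) = j + 1 - 1 + k by omega]
      exact hdom k (by omega)

theorem Em_append_one (v y : Word) :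
    Em (v ++ [1]) y = {j | j ∈ Em v y ∧ j + v.length ≤ y.length} := by
  ext j
  simp only [Em, Set.mem_ofPred_eq, List.length_append, List.length_singleton]
  constructor
  · rintro ⟨hj, hlen, hdom⟩
    refine ⟨⟨hj, by omega, fun k hk => ?_⟩, by omega⟩
    rw [← List.getD_append v [1] 1 k hk]
    exact hdom k (by omega)
  · rintro ⟨⟨hj, -, hdom⟩, hlen⟩
    refine ⟨hj, by omega, fun k hk => ?_⟩
    rcases Nat.lt_succ_iff_lt_or_eq.mp hk with hk | rfl
    · rw [List.getD_append v [1] 1 k hk]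
      exact hdom k hk
    · rw [List.getD_append_right _ _ _ _ le_rfl, Nat.sub_self, List.getD_cons_zero]
      exact one_le

theorem add_length_mem_Em_append_iff {j : ℕ} (hj : 1 ≤ j) (u a b : Word) :
    j + a.length ∈ Em u (a ++ b) ↔ j ∈ Em u b := by
  have hshift (k : ℕ) : (a ++ b).getD (j + a.length - 1 + k) 1 = b.getD (j - 1 + k) 1 := by
    rw [List.getD_append_right _ _ _ _ (by omega)]
    congr 1
    omega
  simp only [Em, Set.mem_ofPred_eq, List.length_append, hshift]
  constructor
  · rintro ⟨-, hlen, hdom⟩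
    exact ⟨hj, by omega, hdom⟩
  · rintro ⟨-, hlen, hdom⟩
    exact ⟨by omega, by omega, hdom⟩

theorem mem_Em_append_iff_of_le {j : ℕ} (u a b : Word) (h : j - 1 + u.length ≤ a.length) :
    j ∈ Em u (a ++ b) ↔ j ∈ Em u a := by
  have hprefix : ∀ k < u.length, (a ++ b).getD (j - 1 + k) 1 = a.getD (j - 1 + k) 1 :=
    fun k hk => List.getD_append _ _ _ _ (by omega)
  simp only [Em, Set.mem_ofPred_eq, List.length_append]
  constructor
  · rintro ⟨hj, -, hdom⟩
    exact ⟨hj, h, fun k hk => hprefix k hk ▸ hdom k hk⟩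
  · rintro ⟨hj, -, hdom⟩
    exact ⟨hj, by omega, fun k hk => (hprefix k hk).symm ▸ hdom k hk⟩

theorem Em_append_one_rotate_one (v x : Word) :
    Em (v ++ [1]) (x.rotate 1) = {j | 1 ≤ j ∧ j + 1 ∈ Em v x} := by
  ext j
  rw [Em_append_one, Set.mem_ofPred_eq, Set.mem_ofPred_eq]
  rcases x with _ | ⟨c, x⟩
  · simp only [Em, List.rotate_nil, List.length_nil, Set.mem_ofPred_eq]
    omega
  rw [List.rotate_cons_succ, List.rotate_zero, List.length_append, List.length_singleton,
    ← List.singleton_append, show j + 1 = j + [c].length from rfl]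
  constructor
  · rintro ⟨hmem, hlen⟩
    have hj := hmem.1
    exact ⟨hj, (add_length_mem_Em_append_iff hj v [c] x).2
      ((mem_Em_append_iff_of_le v x [c] (by omega)).1 hmem)⟩
  · rintro ⟨hj, hmem⟩
    have hmem' := (add_length_mem_Em_append_iff hj v [c] x).1 hmem
    have hlen := hmem'.2.1
    exact ⟨(mem_Em_append_iff_of_le v x [c] hlen).2 hmem', by omega⟩

theorem Em_append_cons_of_forall_lt {u : Word} {c : ℕ+} (hu : ∀ x ∈ u, c < x) (a b : Word) :
    Em u (a ++ c :: b) = Em u a ∪ (· + (a.length + 1)) '' Em u b := by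
  have hsplit : a ++ c :: b = (a ++ [c]) ++ b := by simp
  ext j
  simp only [Set.mem_union, Set.mem_image]
  constructor
  · intro hj
    by_cases hleft : j - 1 + u.length ≤ a.length
    · exact Or.inl ((mem_Em_append_iff_of_le u a _ hleft).1 hj)
    by_cases hright : a.length + 2 ≤ j
    · refine Or.inr ⟨j - (a.length + 1), ?_, by omega⟩
      rw [← add_length_mem_Em_append_iff (by omega) u (a ++ [c]) b, ← hsplit]
      convert hj using 1
      simp only [List.length_append, List.length_singleton]
      omega
    · exfalso
      obtain ⟨-, hlen, hdom⟩ := hj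
      have hk : a.length - (j - 1) < u.length := by omega
      have hle := hdom _ hk
      rw [show j - 1 + (a.length - (j - 1)) = a.length by omega,
        List.getD_append_right _ _ _ _ le_rfl, Nat.sub_self, List.getD_cons_zero,
        List.getD_eq_getElem _ _ hk] at hle
      exact (hu _ (List.getElem_mem hk)).not_ge hle
  · rintro (hj | ⟨j', hj', rfl⟩)
    · exact (mem_Em_append_iff_of_le u a _ hj.2.1).2 hj
    · rw [hsplit, show j' + (a.length + 1) = j' + (a ++ [c]).length by simp]
      exact (add_length_mem_Em_append_iff hj'.1 u _ b).2 hj'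

theorem Em_map_of_strictMono {g : ℕ+ → ℕ+} (hg : StrictMono g) (u x : Word) :
    Em (u.map g) (x.map g) = Em u x := by
  ext j
  simp only [Em, Set.mem_ofPred_eq, List.length_map]
  refine and_congr_right fun _ => and_congr_right fun hlen =>
    forall_congr' fun k => imp_congr_right fun hk => ?_
  rw [List.getD_eq_getElem _ _ (by simpa using hk), List.getD_eq_getElem _ _ (by simp; omega),
    List.getElem_map, List.getElem_map, List.getD_eq_getElem _ _ hk,
    List.getD_eq_getElem _ _ (by omega)]
  exact hg.le_iff_le

theorem Em_map_add_one (u x : Word) : Em (u.map (· + 1)) (x.map (· + 1)) = Em u x :=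
  Em_map_of_strictMono (strictMono_id.add_const 1) u x

def EmRel (u v a b : Word) : Prop :=
  a.length = b.length ∧ ht a = ht b ∧ Em u a = Em v b

theorem EmRel.append_one_append {u v a a' b b' : Word} (hu : ∀ x ∈ u, 1 < x)
    (hv : ∀ x ∈ v, 1 < x) (ha : EmRel u v a a') (hb : EmRel u v b b') :
    EmRel u v (a ++ [1] ++ b) (a' ++ [1] ++ b') := by
  obtain ⟨hla, hhta, hEma⟩ := ha
  obtain ⟨hlb, hhtb, hEmb⟩ := hb
  simp only [EmRel, List.append_assoc, List.singleton_append, List.length_append,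
    List.length_cons, ht_append, ht_cons, Em_append_cons_of_forall_lt hu,
    Em_append_cons_of_forall_lt hv]
  exact ⟨by omega, by omega, by rw [hEma, hEmb, hla]⟩

def EmTransfer (u v : Word) (f : Word → Word) : Prop :=
  ∀ w, EmRel u v w (f w)

theorem sswilf_iff {u v : Word} : SSWilf u v ↔ ∃ f, Bijective f ∧ EmTransfer u v f :=
  ⟨fun ⟨f, hf, hpres, hEm⟩ =>
    ⟨f, hf, fun w => ⟨(hpres w).1.symm, (hpres w).2.symm, hEm w⟩⟩,
   fun ⟨f, hf, hT⟩ =>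
    ⟨f, hf, fun w => ⟨(hT w).1.symm, (hT w).2.1.symm⟩, fun w => (hT w).2.2⟩⟩

theorem bijective_rotate_one : Bijective fun w : Word => w.rotate 1 :=
  ⟨List.rotate_injective 1, fun _ => ⟨_, List.rotate_eq_iff.2 rfl⟩⟩

-- Truncated subtraction on `ℕ+` fixes `1`, so only blocks avoiding `1` are recovered by `+ 1`.
def liftBlock (f : Word → Word) (b : Word) : Word :=
  (f (b.map (· - 1))).map (· + 1)

def blockwise (f : Word → Word) (w : Word) : Word :=
  [1].intercalate ((w.splitOn 1).map (liftBlock f))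

theorem liftBlock_liftBlock {f g : Word → Word} (hgf : LeftInverse g f) {b : Word}
    (hb : 1 ∉ b) : liftBlock g (liftBlock f b) = b := by
  rw [liftBlock, liftBlock, map_sub_one_map_add_one, hgf, map_add_one_map_sub_one hb]

theorem leftInverse_blockwise {f g : Word → Word} (hgf : LeftInverse g f) :
    LeftInverse (blockwise g) (blockwise f) := fun w => by
  have hblocks : (w.splitOn 1).map (liftBlock g ∘ liftBlock f) = w.splitOn 1 :=
    (List.map_congr_left fun b hb =>
      liftBlock_liftBlock hgf (List.notMem_of_mem_splitOn hb)).trans (List.map_id _)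
  rw [blockwise, blockwise, List.splitOn_intercalate, List.map_map, hblocks,
    List.intercalate_splitOn]
  · simpa [liftBlock] using fun b _ => one_notMem_map_add_one _
  · simp

theorem bijective_blockwise {f : Word → Word} (hf : Bijective f) :
    Bijective (blockwise f) := by
  obtain ⟨g, hgf, hfg⟩ := bijective_iff_has_inverse.1 hf
  exact bijective_iff_has_inverse.2
    ⟨blockwise g, leftInverse_blockwise hgf, leftInverse_blockwise hfg⟩

namespace EmTransfer

variable {u v : Word} {f : Word → Word}

theorem cons_one (hf : EmTransfer u v f) : EmTransfer (1 :: u) (1 :: v) f := fun w => by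
  obtain ⟨hlen, hht, hEm⟩ := hf w
  exact ⟨hlen, hht, by rw [Em_cons_one, Em_cons_one, hEm]⟩

theorem cons_one_append_one (hf : EmTransfer u v f) :
    EmTransfer (1 :: u) (v ++ [1]) (fun w => (f w).rotate 1) := fun w => by
  obtain ⟨hlen, hht, hEm⟩ := hf w
  exact ⟨by rw [List.length_rotate, hlen], by rw [ht_rotate, hht],
    by rw [Em_cons_one, Em_append_one_rotate_one, hEm]⟩

theorem emRel_liftBlock (hf : EmTransfer u v f) {b : Word} (hb : 1 ∉ b) :
    EmRel (u.map (· + 1)) (v.map (· + 1)) b (liftBlock f b) := by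
  obtain ⟨c, rfl⟩ : ∃ c : Word, b = c.map (· + 1) :=
    ⟨_, (map_add_one_map_sub_one hb).symm⟩
  obtain ⟨hlen, hht, hEm⟩ := hf c
  rw [liftBlock, map_sub_one_map_add_one]
  refine ⟨by simp [hlen], by rw [ht_map_add_one, ht_map_add_one, hht, hlen], ?_⟩
  rw [Em_map_add_one, Em_map_add_one, hEm]

theorem map_add_one (hf : EmTransfer u v f) :
    EmTransfer (u.map (· + 1)) (v.map (· + 1)) (blockwise f) := fun w => by
  have hblocks : List.Forall₂ (EmRel (u.map (· + 1)) (v.map (· + 1))) (w.splitOn 1)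
      ((w.splitOn 1).map (liftBlock f)) :=
    List.forall₂_map_right_iff.2 <| List.forall₂_same.2 fun b hb =>
      hf.emRel_liftBlock (List.notMem_of_mem_splitOn hb)
  have hnil : liftBlock f [] = [] := by
    rw [liftBlock, List.map_eq_nil_iff, ← List.length_eq_zero_iff]
    exact (hf []).1.symm
  have := hblocks.intercalate
    (fun _ _ _ _ => EmRel.append_one_append (fun _ => one_lt_of_mem_map_add_one)
      (fun _ => one_lt_of_mem_map_add_one))
    (by simpa only [hnil] using hf.emRel_liftBlock List.not_mem_nil)
  rwa [List.intercalate_splitOn] at this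

end EmTransfer

/-- if `u ∼ₛₛ v` then `1u ∼ₛₛ 1v`, `1u ∼ₛₛ v1` and `u⁺ ∼ₛₛ v⁺`. -/
theorem sswilf_cons_append_plus (u v : Word) (h : SSWilf u v) :
    SSWilf (1 :: u) (1 :: v) ∧ SSWilf (1 :: u) (v ++ [1]) ∧
      SSWilf (u.map (· + 1)) (v.map (· + 1)) := by
  obtain ⟨f, hf, hT⟩ := sswilf_iff.1 h
  exact ⟨sswilf_iff.2 ⟨f, hf, hT.cons_one⟩,
    sswilf_iff.2 ⟨_, bijective_rotate_one.comp hf, hT.cons_one_append_one⟩,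
    sswilf_iff.2 ⟨_, bijective_blockwise hf, hT.map_add_one⟩⟩
end

section
/- If v = m(u, E₁) is the minimal cluster of a word u with embedding set E₁, and w = m(v, E₂) is the minimal cluster of v with embedding set E₂, then w is the minimal cluster of u with embedding set E₃ = { i + j − 1 : i ∈ E₁, j ∈ E₂ }. -/
/-
Column `p` of `m(m(u, E₁), E₂)` is the maximum over `b ∈ E₂` of the letter of `m(u, E₁)` in
column `p - b + 1`, which is itself the maximum over `a ∈ E₁` of the copy of `u` starting at
`a + b - 1` in column `p`. Both sides are therefore the maximum over the same copies of `u`, and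
their lengths agree because `max E₃ = max E₁ + max E₂ - 1`. All positions being at least `1`
keeps the truncated subtractions exact.
-/

/-- Row `a`, column `p` of the array defining `m(u, E)`: the copy of `u` written from column `a`
on, padded with `1`. -/
def shiftedLetter (u : Word) (a p : ℕ) : ℕ :=
  if a ≤ p ∧ p < a + u.length then ((u.getD (p - a) 1 : ℕ+) : ℕ) else 1

lemma one_le_shiftedLetter (u : Word) (a p : ℕ) : 1 ≤ shiftedLetter u a p := by
  unfold shiftedLetter
  split_ifs
  exacts [PNat.pos _, le_rfl]

lemma shiftedLetter_eq_one (u : Word) {a p : ℕ} (h : ¬(a ≤ p ∧ p < a + u.length)) :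
    shiftedLetter u a p = 1 :=
  if_neg h

lemma coe_clusterAt {E : Finset ℕ} (hE : E.Nonempty) (u : Word) (p : ℕ) :
    ((clusterAt u E p : ℕ+) : ℕ) = E.sup (shiftedLetter u · p) := by
  obtain ⟨a, ha⟩ := hE
  exact PNat.toPNat'_coe ((one_le_shiftedLetter u a p).trans
    (Finset.le_sup (f := (shiftedLetter u · p)) ha))

lemma mcluster_length (u : Word) (E : Finset ℕ) :
    (mcluster u E).length = E.sup id - 1 + u.length := by
  simp [mcluster]

lemma mcluster_getD (u : Word) (E : Finset ℕ) {k : ℕ}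
    (hk : k < E.sup id - 1 + u.length) :
    (mcluster u E).getD k 1 = clusterAt u E (k + 1) := by
  simp [mcluster, List.getD_eq_getElem?_getD, hk]

lemma sup_image_add_sub_one {E₁ E₂ : Finset ℕ} (h₁ : E₁.Nonempty) (h₂ : E₂.Nonempty) :
    ((E₁ ×ˢ E₂).image (fun q => q.1 + q.2 - 1)).sup id = E₁.sup id + E₂.sup id - 1 := by
  apply le_antisymm
  · simp only [Finset.sup_le_iff, Finset.mem_image, Finset.mem_product, id]
    rintro _ ⟨⟨a, b⟩, ⟨ha, hb⟩, rfl⟩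
    have := Finset.le_sup (f := id) ha
    have := Finset.le_sup (f := id) hb
    simp only [id] at *
    omega
  · obtain ⟨a, ha, hae⟩ := Finset.exists_mem_eq_sup E₁ h₁ id
    obtain ⟨b, hb, hbe⟩ := Finset.exists_mem_eq_sup E₂ h₂ id
    rw [hae, hbe]
    exact Finset.le_sup (f := id)
      (Finset.mem_image.2 ⟨(a, b), Finset.mem_product.2 ⟨ha, hb⟩, rfl⟩)

lemma shiftedLetter_mcluster {E₁ : Finset ℕ} (hne : E₁.Nonempty) (hpos : ∀ a ∈ E₁, 1 ≤ a)
    (u : Word) {b : ℕ} (hb : 1 ≤ b) (p : ℕ) :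
    shiftedLetter (mcluster u E₁) b p = E₁.sup (fun a => shiftedLetter u (a + b - 1) p) := by
  by_cases hp : b ≤ p ∧ p < b + (mcluster u E₁).length
  · rw [mcluster_length] at hp
    rw [shiftedLetter, if_pos (by rwa [mcluster_length]), mcluster_getD u E₁ (by omega),
      coe_clusterAt hne]
    refine Finset.sup_congr rfl fun a ha => ?_
    have := hpos a ha
    unfold shiftedLetter
    rw [show p - b + 1 - a = p - (a + b - 1) by omega]
    exact if_congr (by omega) rfl rfl
  · rw [shiftedLetter_eq_one _ hp]
    rw [mcluster_length] at hp
    refine (le_antisymm (Finset.sup_le fun a ha => ?_) ?_).symm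
    · have := hpos a ha
      have := Finset.le_sup (f := id) ha
      exact (shiftedLetter_eq_one u (by simp only [id] at *; omega)).le
    · obtain ⟨a, ha⟩ := hne
      exact (one_le_shiftedLetter u _ p).trans
        (Finset.le_sup (f := fun a => shiftedLetter u (a + b - 1) p) ha)

lemma clusterAt_mcluster {E₁ E₂ : Finset ℕ} (hne₁ : E₁.Nonempty) (hpos₁ : ∀ a ∈ E₁, 1 ≤ a)
    (hne₂ : E₂.Nonempty) (hpos₂ : ∀ b ∈ E₂, 1 ≤ b) (u : Word) (p : ℕ) :
    clusterAt (mcluster u E₁) E₂ p = clusterAt u ((E₁ ×ˢ E₂).image (fun q => q.1 + q.2 - 1)) p := by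
  apply PNat.coe_injective
  rw [coe_clusterAt hne₂, coe_clusterAt ((hne₁.product hne₂).image _), Finset.sup_image,
    Finset.sup_product_right]
  exact Finset.sup_congr rfl fun b hb => shiftedLetter_mcluster hne₁ hpos₁ u (hpos₂ b hb) p

/-- a minimal cluster of a minimal cluster of `u` is a minimal
cluster of `u`, on the embedding set `{i + j - 1 : i ∈ E₁, j ∈ E₂}`. -/
theorem mcluster_mcluster (u : Word) (E₁ E₂ : Finset ℕ)
    (h1 : IsEmbSet u.length E₁) (h2 : IsEmbSet (mcluster u E₁).length E₂) :
    mcluster (mcluster u E₁) E₂ =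
      mcluster u ((E₁ ×ˢ E₂).image (fun p => p.1 + p.2 - 1)) := by
  obtain ⟨h₁one, h₁pos, -⟩ := h1
  obtain ⟨h₂one, h₂pos, -⟩ := h2
  have hS₁ : 1 ≤ E₁.sup id := Finset.le_sup (f := id) h₁one
  have hS₂ : 1 ≤ E₂.sup id := Finset.le_sup (f := id) h₂one
  have hlen : E₂.sup id - 1 + (mcluster u E₁).length
      = ((E₁ ×ˢ E₂).image (fun p => p.1 + p.2 - 1)).sup id - 1 + u.length := by
    rw [mcluster_length, sup_image_add_sub_one ⟨1, h₁one⟩ ⟨1, h₂one⟩]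
    omega
  rw [mcluster.eq_1 (mcluster u E₁) E₂, hlen, mcluster.eq_1 u]
  exact List.map_congr_left fun j _ =>
    clusterAt_mcluster ⟨1, h₁one⟩ h₁pos ⟨1, h₂one⟩ h₂pos u (j + 1)
end

section
/- Let u, v be permutations of [n] with inverses s = u⁻¹ and t = v⁻¹. Then u is super-strongly Wilf equivalent to v if and only if for every i ∈ [n−1] and every embedding set E, the cardinality of s̄ᵢ ∩ (⋃_{j=i+1}^{n} s̄ⱼ) equals the cardinality of t̄ᵢ ∩ (⋃_{j=i+1}^{n} t̄ⱼ), where for a position p, p̄ denotes (p−1) + E = {p−1+e : e ∈ E}. -/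
/-!
Write `Pᵢ(u) = posGe u i` for the set of positions (counted from `0`) of the letters `≥ i` of
`u`. In the cluster of `u` on an embedding set `E`, the letters `≥ i` stand exactly at the
positions of `Pᵢ(u) + E`, so for words with letters in `[n]` the cluster of length `L` has
height `L + ∑_{i=2}^n |Pᵢ(u) + E|`.

Super-strong Wilf equivalence is the same as equality of all these cluster heights. A bijection
`f` sends the cluster of `u` to a word above the cluster of `v`, which compares the heights.
Conversely, lowering a word by the cluster of `u` and raising it by the cluster of `v` matches
the words containing `u` at every position of `S` with those containing `v` there; Möbius
inversion over `S` then matches the words whose embedding set is exactly `S`, and these fibres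
glue to a bijection.

By inclusion–exclusion the sums `∑ᵢ |Pᵢ + F|` determine the sums `∑ᵢ |⋂_{g ∈ G} (Pᵢ + g)|`. As
`|Pᵢ| = n + 1 - i` decreases, taking for `G` the reflection of `Pᵢ(u)` isolates the `i`-th
term and shows, by induction on `i`, that `Pᵢ(v)` is a translate of `Pᵢ(u)`. The intersection
rule is that condition read one layer at a time: `Pᵢ = {sᵢ - 1} ∪ Pᵢ₊₁`, so
`|s̄ᵢ ∩ ⋃_{j>i} s̄ⱼ| = |E| + |Pᵢ₊₁ + E| - |Pᵢ + E|`.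
-/

open Finset
open scoped Pointwise

/-- Over a `Word`, `w.map (fun x => (x : ℕ))` (as in `ht`, `pos` and `IsPerm`) elaborates the
coercion through the list monad; this turns it into a plain `List.map`. -/
lemma map_coe_eq (w : Word) : w.map (fun x => (x : ℕ)) = w.map PNat.val := by
  simp only [List.map_id']
  exact List.flatMap_pure_eq_map PNat.val w

lemma ht_eq_sum_range (w : Word) : ht w = ∑ k ∈ range w.length, (w.getD k 1 : ℕ) := by
  rw [ht, map_coe_eq, ← Fin.sum_univ_fun_getElem, sum_range]
  simp

lemma pos_sub_one (u : Word) (j : ℕ) : pos u j - 1 = (u.map PNat.val).idxOf j := by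
  rw [pos, map_coe_eq, Nat.add_sub_cancel]

lemma coe_getD_eq_getElem {u : Word} {k : ℕ} (hk : k < u.length) :
    (u.getD k 1 : ℕ) = (u.map PNat.val)[k]'(by simpa using hk) := by
  simp [hk]

lemma shiftSet_eq (p : ℕ) (E : Finset ℕ) : shiftSet p E = {p - 1} + E := by
  ext x; simp [shiftSet, mem_add]

def IsTranslate (P Q : Finset ℕ) : Prop := ∃ a b : ℕ, P + {a} = Q + {b}

lemma add_eq_biUnion (P F : Finset ℕ) : P + F = F.biUnion (P + {·}) := by
  ext x
  simp only [mem_add, mem_biUnion, mem_singleton, exists_eq_left]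
  exact ⟨fun ⟨p, hp, g, hg, h⟩ => ⟨g, hg, p, hp, h⟩, fun ⟨g, hg, p, hp, h⟩ => ⟨p, hp, g, hg, h⟩⟩

lemma card_add_eq_of_add_singleton_eq {P Q : Finset ℕ} {a b : ℕ} (h : P + {a} = Q + {b})
    (F : Finset ℕ) : #(P + F) = #(Q + F) := by
  rw [← card_add_singleton (P + F) a, ← card_add_singleton (Q + F) b, add_right_comm, h,
    add_right_comm]

lemma inf'_add_singleton (P G : Finset ℕ) (hG : G.Nonempty) (a : ℕ) :
    G.inf' hG (P + {a} + {·}) = G.inf' hG (P + {·}) + {a} := by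
  have := apply_inf'_eq_inf'_comp hG (f := (P + {·})) (· + {a}) fun X Y =>
    inter_add_singleton X Y a
  simp only [Function.comp_def] at this
  rw [this]
  congr 1
  funext g
  exact add_right_comm _ _ _

lemma card_inf'_eq_of_add_singleton_eq {P Q : Finset ℕ} {a b : ℕ} (h : P + {a} = Q + {b})
    (G : Finset ℕ) (hG : G.Nonempty) :
    #(G.inf' hG (P + {·})) = #(G.inf' hG (Q + {·})) := by
  rw [← card_add_singleton _ a, ← card_add_singleton (G.inf' hG (Q + {·})) b,
    ← inf'_add_singleton, ← inf'_add_singleton, h]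

lemma inf'_add_singleton_eq_empty {P G : Finset ℕ} (h : #P < #G) (hG : G.Nonempty) :
    G.inf' hG (P + {·}) = ∅ := by
  refine eq_empty_of_forall_notMem fun x hx => h.not_ge ?_
  simp only [mem_inf', mem_add, mem_singleton] at hx
  refine card_le_card_of_injOn (x - ·) (fun g hg => ?_) (fun g hg g' hg' hgg' => ?_)
  · obtain ⟨p, hp, _, rfl, rfl⟩ := hx g hg
    simpa using hp
  · obtain ⟨p, -, _, rfl, hpg⟩ := hx g hg
    obtain ⟨p', -, _, rfl, hpg'⟩ := hx g' hg'
    simp only at hgg'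
    omega

section InclusionExclusion

variable {ι α β : Type*} [DecidableEq α] [DecidableEq β]

lemma card_inter_union_add_card_union (A B C : Finset α) :
    #(A ∩ B ∪ C) + #(A ∪ B ∪ C) = #(A ∪ C) + #(B ∪ C) := by
  rw [inter_union_distrib_right, union_union_distrib_right, add_comm]
  exact card_union_add_card_inter _ _

theorem sum_card_inf'_eq_of_sum_card_biUnion_eq {s : Finset ι} {A B : ι → β → Finset α}
    {D : Finset β}
    (h : ∀ F ⊆ D, F.Nonempty → ∑ i ∈ s, #(F.biUnion (A i)) = ∑ i ∈ s, #(F.biUnion (B i)))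
    {G : Finset β} (hGD : G ⊆ D) (hG : G.Nonempty) :
    ∑ i ∈ s, #(G.inf' hG (A i)) = ∑ i ∈ s, #(G.inf' hG (B i)) := by
  suffices key : ∀ F ⊆ D,
      ∑ i ∈ s, #(G.inf' hG (A i) ∪ F.biUnion (A i)) =
        ∑ i ∈ s, #(G.inf' hG (B i) ∪ F.biUnion (B i)) by
    simpa using key ∅ (empty_subset D)
  induction hG using Nonempty.cons_induction with
  | singleton g =>
    intro F hF
    simpa [← biUnion_insert] using h (insert g F) (insert_subset (hGD (mem_singleton_self g)) hF)
      (insert_nonempty g F)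
  | cons b G hb hG ih =>
    intro F hF
    have hbD : b ∈ D := hGD (mem_cons_self b G)
    have ih' := ih ((subset_cons hb).trans hGD)
    have split (X : ι → β → Finset α) (i : ι) :
        #((cons b G hb).inf' (cons_nonempty hb) (X i) ∪ F.biUnion (X i)) +
            #(G.inf' hG (X i) ∪ (insert b F).biUnion (X i)) =
          #(G.inf' hG (X i) ∪ F.biUnion (X i)) + #((insert b F).biUnion (X i)) := by
      rw [inf'_cons, inf_eq_inter, inter_comm, biUnion_insert, ← union_assoc]
      exact card_inter_union_add_card_union _ _ _
    have hA := sum_congr rfl fun i (_ : i ∈ s) => split A i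
    have hB := sum_congr rfl fun i (_ : i ∈ s) => split B i
    simp only [sum_add_distrib] at hA hB
    have := ih' F hF
    have := ih' (insert b F) (insert_subset hbD hF)
    have := h (insert b F) (insert_subset hbD hF) (insert_nonempty b F)
    omega

end InclusionExclusion

def reflect (P : Finset ℕ) : Finset ℕ := P.image (P.sup id - ·)

lemma le_sup_id {P : Finset ℕ} {p : ℕ} (hp : p ∈ P) : p ≤ P.sup id := le_sup (f := id) hp

lemma card_reflect (P : Finset ℕ) : #(reflect P) = #P :=
  card_image_of_injOn fun p hp q hq hpq => by
    have := le_sup_id (mem_coe.1 hp); have := le_sup_id (mem_coe.1 hq)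
    omega

lemma reflect_subset_range {P : Finset ℕ} {N : ℕ} (hP : P ⊆ range N) : reflect P ⊆ range N := by
  intro g hg
  obtain ⟨p, hp, rfl⟩ := mem_image.1 hg
  obtain ⟨q, hq, hsup⟩ := exists_mem_eq_sup P ⟨p, hp⟩ id
  have := mem_range.1 (hP hq)
  exact mem_range.2 (by simp only [hsup, id]; omega)

lemma sup_id_mem_inf'_reflect {P : Finset ℕ} (hG : (reflect P).Nonempty) :
    P.sup id ∈ (reflect P).inf' hG (P + {·}) := by
  simp only [reflect, mem_inf', forall_mem_image, mem_add, mem_singleton]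
  exact fun p hp => ⟨p, hp, _, rfl, by have := le_sup_id hp; omega⟩

lemma isTranslate_of_mem_inf'_reflect {P Q : Finset ℕ} (hcard : #Q = #P)
    (hG : (reflect P).Nonempty) {x : ℕ} (hx : x ∈ (reflect P).inf' hG (Q + {·})) :
    IsTranslate P Q := by
  simp only [reflect, mem_inf', forall_mem_image, mem_add, mem_singleton] at hx
  refine ⟨x, P.sup id, eq_of_subset_of_card_le (fun y hy => ?_) (by simp [hcard])⟩
  obtain ⟨p, hp, _, hx', rfl⟩ := mem_add.1 hy
  obtain rfl := mem_singleton.1 hx'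
  obtain ⟨q, hq, _, rfl, hqx⟩ := hx hp
  exact mem_add.2 ⟨q, hq, _, mem_singleton_self _, by have := le_sup_id hp; omega⟩

theorem isTranslate_of_sum_card_inf'_eq {s : Finset ℕ} {P Q : ℕ → Finset ℕ} {N : ℕ}
    (hPN : ∀ i ∈ s, P i ⊆ range N) (hcard : ∀ i ∈ s, #(Q i) = #(P i))
    (hlt : ∀ i ∈ s, ∀ j ∈ s, i < j → #(P j) < #(P i))
    (h : ∀ G ⊆ range N, ∀ hG : G.Nonempty,
      ∑ j ∈ s, #(G.inf' hG (P j + {·})) = ∑ j ∈ s, #(G.inf' hG (Q j + {·}))) :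
    ∀ i ∈ s, IsTranslate (P i) (Q i) := by
  intro i
  induction i using Nat.strong_induction_on with
  | _ i ih =>
  intro hi
  obtain hP | hP := (P i).eq_empty_or_nonempty
  · have hQ : Q i = ∅ := card_eq_zero.1 (by rw [hcard i hi, hP, card_empty])
    exact ⟨0, 0, by rw [hP, hQ]⟩
  set G := reflect (P i)
  have hG : G.Nonempty := hP.image _
  -- Lower levels are translates by induction and higher levels have fewer than `#G` points,
  -- so only the `i`-th terms of the sums can differ.
  have hother : ∀ j ∈ s.erase i, #(G.inf' hG (P j + {·})) = #(G.inf' hG (Q j + {·})) := by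
    intro j hj
    obtain ⟨hji, hj⟩ := mem_erase.1 hj
    rcases hji.lt_or_gt with hji | hij
    · obtain ⟨a, b, hab⟩ := ih j hji hj
      exact card_inf'_eq_of_add_singleton_eq hab G hG
    · have := hlt i hi j hj hij
      have : #G = #(P i) := card_reflect _
      rw [inf'_add_singleton_eq_empty (by omega) hG,
        inf'_add_singleton_eq_empty (by rw [hcard j hj]; omega) hG]
  have heq : #(G.inf' hG (P i + {·})) = #(G.inf' hG (Q i + {·})) := by
    have := h G (reflect_subset_range (hPN i hi)) hG
    rw [← add_sum_erase s _ hi, ← add_sum_erase s _ hi, sum_congr rfl hother] at this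
    exact add_right_cancel this
  obtain ⟨x, hx⟩ := card_pos.1 (heq ▸ card_pos.2 ⟨_, sup_id_mem_inf'_reflect hG⟩)
  exact isTranslate_of_mem_inf'_reflect (hcard i hi) hG hx

def posGe (u : Word) (i : ℕ) : Finset ℕ := {k ∈ range u.length | i ≤ (u.getD k 1 : ℕ)}

lemma posGe_subset_range (u : Word) (i : ℕ) : posGe u i ⊆ range u.length := filter_subset _ _

lemma posGe_of_le_one (u : Word) {i : ℕ} (hi : i ≤ 1) : posGe u i = range u.length :=
  filter_true_of_mem fun _ _ => hi.trans (PNat.pos _)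

namespace IsPerm

variable {n : ℕ} {u : Word}

lemma coe_map_eq (hu : IsPerm n u) : (u.map PNat.val : Multiset ℕ) = (Icc 1 n).val := by
  refine (Multiset.eq_of_le_of_card_le (Multiset.le_iff_count.2 fun a => ?_) ?_).symm
  · by_cases ha : a ∈ Icc 1 n
    · rw [Multiset.count_eq_one_of_mem (Icc 1 n).nodup ha, Multiset.coe_count, ← map_coe_eq]
      exact (hu.2 a (mem_Icc.1 ha).1 (mem_Icc.1 ha).2).ge
    · rw [Multiset.count_eq_zero_of_notMem ha]
      exact Nat.zero_le _
  · simp [hu.1]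

lemma mem_map_iff (hu : IsPerm n u) {a : ℕ} : a ∈ u.map PNat.val ↔ a ∈ Icc 1 n := by
  rw [← Multiset.mem_coe, hu.coe_map_eq]
  rfl

lemma nodup (hu : IsPerm n u) : (u.map PNat.val).Nodup := by
  have := (Icc 1 n).nodup
  rwa [← hu.coe_map_eq] at this

lemma coe_le (hu : IsPerm n u) {a : ℕ+} (ha : a ∈ u) : (a : ℕ) ≤ n :=
  (mem_Icc.1 (hu.mem_map_iff.1 (List.mem_map_of_mem ha))).2

lemma posGe_eq_image (hu : IsPerm n u) {i : ℕ} (hi : 1 ≤ i) :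
    posGe u i = (Icc i n).image fun j => pos u j - 1 := by
  ext k
  simp only [posGe, mem_filter, mem_range, mem_image, mem_Icc, pos_sub_one]
  constructor
  · rintro ⟨hk, hik⟩
    rw [coe_getD_eq_getElem hk] at hik
    exact ⟨_, ⟨hik, (mem_Icc.1 (hu.mem_map_iff.1 (List.getElem_mem _))).2⟩,
      hu.nodup.idxOf_getElem _ _⟩
  · rintro ⟨j, hj, rfl⟩
    have hmem : j ∈ u.map PNat.val := hu.mem_map_iff.2 (mem_Icc.2 ⟨by omega, hj.2⟩)
    have hlt := List.idxOf_lt_length_iff.2 hmem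
    rw [List.length_map] at hlt
    refine ⟨hlt, ?_⟩
    rw [coe_getD_eq_getElem hlt, List.getElem_idxOf]
    exact hj.1

lemma card_posGe (hu : IsPerm n u) {i : ℕ} (hi : 1 ≤ i) : #(posGe u i) = n + 1 - i := by
  rw [hu.posGe_eq_image hi, card_image_of_injOn, Nat.card_Icc]
  intro j hj j' _ hjj'
  have hj := mem_Icc.1 (mem_coe.1 hj)
  simp only [pos_sub_one] at hjj'
  exact (List.idxOf_inj (hu.mem_map_iff.2 (mem_Icc.2 ⟨hi.trans hj.1, hj.2⟩))).1 hjj'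

lemma posGe_eq_empty (hu : IsPerm n u) {i : ℕ} (hi : n < i) : posGe u i = ∅ := by
  rw [hu.posGe_eq_image (by omega), Icc_eq_empty (by omega), image_empty]

lemma posGe_eq_insert (hu : IsPerm n u) {i : ℕ} (hi : 1 ≤ i) (hin : i ≤ n) :
    posGe u i = insert (pos u i - 1) (posGe u (i + 1)) := by
  have hIcc : Icc i n = insert i (Icc (i + 1) n) := by
    ext j
    simp only [mem_Icc, mem_insert]
    omega
  rw [hu.posGe_eq_image hi, hu.posGe_eq_image (by omega), hIcc, image_insert]

lemma biUnion_shiftSet_pos (hu : IsPerm n u) {i : ℕ} (hi : 1 ≤ i) (E : Finset ℕ) :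
    (Icc i n).biUnion (fun j => shiftSet (pos u j) E) = posGe u i + E := by
  rw [hu.posGe_eq_image hi]
  ext x
  simp [shiftSet_eq, mem_add]

end IsPerm

lemma clusterAt_le_iff {u : Word} {E : Finset ℕ} {p : ℕ} {x : ℕ+} :
    clusterAt u E p ≤ x ↔ ∀ a ∈ E, a ≤ p → p < a + u.length → u.getD (p - a) 1 ≤ x := by
  rw [clusterAt, ← PNat.coe_le_coe, Nat.toPNat'_coe,
    show ∀ m : ℕ, (if 0 < m then m else 1) ≤ x ↔ m ≤ x from fun m => by
      have := x.pos; split_ifs <;> omega,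
    Finset.sup_le_iff]
  refine forall₂_congr fun a _ => ?_
  split_ifs with h
  · rw [PNat.coe_le_coe]
    exact ⟨fun hx _ _ => hx, fun hx => hx h.1 h.2⟩
  · exact ⟨fun _ h1 h2 => absurd ⟨h1, h2⟩ h, fun _ => x.pos⟩

lemma le_clusterAt_iff {u : Word} {E : Finset ℕ} {p i : ℕ} (hi : 2 ≤ i) :
    i ≤ (clusterAt u E p : ℕ) ↔
      ∃ a ∈ E, a ≤ p ∧ p < a + u.length ∧ i ≤ (u.getD (p - a) 1 : ℕ) := by
  rw [clusterAt, Nat.toPNat'_coe,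
    show ∀ m : ℕ, i ≤ (if 0 < m then m else 1) ↔ i ≤ m from fun m => by split_ifs <;> omega,
    Finset.le_sup_iff (by simp; omega)]
  refine exists_congr fun a => and_congr_right fun _ => ?_
  split_ifs with h
  · simp [h]
  · exact ⟨fun _ => by omega, fun h' => absurd ⟨h'.1, h'.2.1⟩ h⟩

lemma length_extCluster (u : Word) (E : Finset ℕ) (L : ℕ) : (extCluster u E L).length = L := by
  simp [extCluster]

lemma getD_extCluster {u : Word} {E : Finset ℕ} {L k : ℕ} (hk : k < L) :
    (extCluster u E L).getD k 1 = clusterAt u E (k + 1) := by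
  simp [extCluster, hk]

lemma ht_extCluster (u : Word) (E : Finset ℕ) (L : ℕ) :
    ht (extCluster u E L) = ∑ k ∈ range L, (clusterAt u E (k + 1) : ℕ) := by
  rw [ht_eq_sum_range, length_extCluster]
  exact sum_congr rfl fun k hk => by rw [getD_extCluster (mem_range.1 hk)]

def AboveCluster (u : Word) (E : Finset ℕ) (w : Word) : Prop :=
  ∀ k < w.length, clusterAt u E (k + 1) ≤ w.getD k 1

theorem coe_subset_Em_iff {u w : Word} {E : Finset ℕ}
    (hE : E ⊆ Icc 1 (w.length + 1 - u.length)) :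
    ↑E ⊆ Em u w ↔ AboveCluster u E w := by
  simp only [AboveCluster, clusterAt_le_iff, Set.subset_def, mem_coe, Em, Set.mem_ofPred_eq]
  constructor
  · intro h k hk a ha h1 h2
    obtain ⟨ha1, -, hua⟩ := h a ha
    have := hua (k + 1 - a) (by omega)
    rwa [show a - 1 + (k + 1 - a) = k by omega] at this
  · intro h a ha
    have := mem_Icc.1 (hE ha)
    refine ⟨this.1, by omega, fun k hk => ?_⟩
    have := h (a - 1 + k) (by omega) a ha (by omega) (by omega)
    rwa [show a - 1 + k + 1 - a = k by omega] at this

lemma coe_subset_Em_extCluster {u : Word} {E : Finset ℕ} {L : ℕ}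
    (hE : E ⊆ Icc 1 (L + 1 - u.length)) : ↑E ⊆ Em u (extCluster u E L) :=
  (coe_subset_Em_iff (by rwa [length_extCluster])).2 fun k hk =>
    (getD_extCluster (by rwa [length_extCluster] at hk)).ge

lemma ht_extCluster_le {u w : Word} {E : Finset ℕ} (hE : E ⊆ Icc 1 (w.length + 1 - u.length))
    (hw : ↑E ⊆ Em u w) : ht (extCluster u E w.length) ≤ ht w := by
  rw [ht_extCluster, ht_eq_sum_range]
  exact sum_le_sum fun k hk => PNat.coe_le_coe _ _ |>.2 <|
    (coe_subset_Em_iff hE).1 hw k (mem_range.1 hk)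

theorem ht_extCluster_eq_of_sswilf {u v : Word} (hlen : u.length = v.length) (h : SSWilf u v)
    {E : Finset ℕ} {L : ℕ} (hE : E ⊆ Icc 1 (L + 1 - u.length)) :
    ht (extCluster u E L) = ht (extCluster v E L) := by
  obtain ⟨f, hf, hfht, hfEm⟩ := h
  apply le_antisymm
  · obtain ⟨w, hw⟩ := hf.2 (extCluster v E L)
    have hwL : w.length = L := by rw [← (hfht w).1, hw, length_extCluster]
    have hEw : ↑E ⊆ Em u w := by
      rw [hfEm, hw]
      exact coe_subset_Em_extCluster (hlen ▸ hE)
    calc ht (extCluster u E L) ≤ ht w := hwL ▸ ht_extCluster_le (by rwa [hwL]) hEw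
      _ = ht (extCluster v E L) := by rw [← (hfht w).2, hw]
  · have hwL : (f (extCluster u E L)).length = L := by rw [(hfht _).1, length_extCluster]
    have hEw : ↑E ⊆ Em v (f (extCluster u E L)) := by
      rw [← hfEm]
      exact coe_subset_Em_extCluster hE
    have := ht_extCluster_le (by rwa [hwL, ← hlen]) hEw
    rw [hwL, (hfht _).2] at this
    exact this

def clusterShift (u v : Word) (E : Finset ℕ) (w : Word) : Word :=
  w.mapIdx fun k (a : ℕ+) =>
    ((a : ℕ) - (clusterAt u E (k + 1) : ℕ) + (clusterAt v E (k + 1) : ℕ)).toPNat'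

section clusterShift

variable {u v w : Word} {E : Finset ℕ}

lemma length_clusterShift : (clusterShift u v E w).length = w.length := List.length_mapIdx

lemma coe_getD_clusterShift {k : ℕ} (hk : k < w.length) :
    ((clusterShift u v E w).getD k 1 : ℕ) =
      (w.getD k 1 : ℕ) - clusterAt u E (k + 1) + clusterAt v E (k + 1) := by
  unfold clusterShift
  rw [List.getD_eq_getElem _ _ (by simpa using hk), List.getElem_mapIdx, Nat.toPNat'_coe,
    if_pos (by positivity), List.getD_eq_getElem _ _ hk]

lemma aboveCluster_clusterShift (hw : AboveCluster u E w) :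
    AboveCluster v E (clusterShift u v E w) := by
  intro k hk
  rw [length_clusterShift] at hk
  have := PNat.coe_le_coe _ _ |>.2 (hw k hk)
  rw [← PNat.coe_le_coe, coe_getD_clusterShift hk]
  omega

lemma ht_clusterShift_add (hw : AboveCluster u E w) :
    ht (clusterShift u v E w) + ht (extCluster u E w.length) =
      ht w + ht (extCluster v E w.length) := by
  rw [ht_extCluster, ht_extCluster, ht_eq_sum_range, ht_eq_sum_range, length_clusterShift,
    ← sum_add_distrib, ← sum_add_distrib]
  refine sum_congr rfl fun k hk => ?_
  have := PNat.coe_le_coe _ _ |>.2 (hw k (mem_range.1 hk))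
  rw [coe_getD_clusterShift (mem_range.1 hk)]
  omega

lemma clusterShift_clusterShift (hw : AboveCluster u E w) :
    clusterShift v u E (clusterShift u v E w) = w := by
  refine List.ext_getElem (by rw [length_clusterShift, length_clusterShift])
    fun k hk hk' => PNat.coe_injective ?_
  have := PNat.coe_le_coe _ _ |>.2 (hw k hk')
  rw [← List.getD_eq_getElem _ 1, ← List.getD_eq_getElem _ 1,
    coe_getD_clusterShift (w := clusterShift u v E w) (by rwa [length_clusterShift]),
    coe_getD_clusterShift hk']
  omega

end clusterShift

def words (L h : ℕ) : Finset Word :=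
  {w ∈ univ.image fun c : Composition h => c.blocks.map Nat.toPNat' | w.length = L}

lemma mem_words {L h : ℕ} {w : Word} : w ∈ words L h ↔ w.length = L ∧ ht w = h := by
  simp only [words, mem_filter, mem_image, mem_univ, true_and, and_comm (a := w.length = L)]
  refine and_congr_left fun _ => ⟨?_, fun hw => ?_⟩
  · rintro ⟨c, rfl⟩
    rw [ht, map_coe_eq, List.map_map]
    refine (congrArg List.sum ?_).trans c.blocks_sum
    refine (List.map_congr_left fun i hi => ?_).trans (List.map_id _)
    simp [Nat.toPNat'_coe, c.blocks_pos hi]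
  · refine ⟨⟨w.map PNat.val, by simp, by rw [← hw, ht, map_coe_eq]⟩, ?_⟩
    simp [List.map_map, Function.comp_def]

open Classical in
noncomputable def emFinset (u w : Word) : Finset ℕ :=
  {j ∈ Icc 1 (w.length + 1 - u.length) | j ∈ Em u w}

lemma emFinset_subset (u w : Word) : emFinset u w ⊆ Icc 1 (w.length + 1 - u.length) := by
  classical
  exact filter_subset _ _

lemma coe_emFinset (u w : Word) : (emFinset u w : Set ℕ) = Em u w := by
  ext j
  simp only [emFinset, coe_filter, mem_Icc]
  exact ⟨fun h => h.2, fun h => ⟨⟨h.1, by have := h.2.1; omega⟩, h⟩⟩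

lemma mem_filter_subset_emFinset_iff {u w : Word} {L h : ℕ} {E : Finset ℕ}
    (hE : E ⊆ Icc 1 (L + 1 - u.length)) :
    w ∈ {w ∈ words L h | E ⊆ emFinset u w} ↔
      w.length = L ∧ ht w = h ∧ AboveCluster u E w := by
  rw [mem_filter, mem_words, and_assoc]
  refine and_congr_right fun hw => and_congr_right fun _ => ?_
  rw [← coe_subset, coe_emFinset, coe_subset_Em_iff (by rwa [hw])]

lemma clusterShift_mem_filter_subset_emFinset {u v w : Word} {L h : ℕ} {E : Finset ℕ}
    (hE : E ⊆ Icc 1 (L + 1 - u.length)) (hE' : E ⊆ Icc 1 (L + 1 - v.length))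
    (hht : ht (extCluster u E L) = ht (extCluster v E L))
    (hw : w ∈ {w ∈ words L h | E ⊆ emFinset u w}) :
    clusterShift u v E w ∈ {w ∈ words L h | E ⊆ emFinset v w} := by
  obtain ⟨hwL, hwh, hwE⟩ := (mem_filter_subset_emFinset_iff hE).1 hw
  have := ht_clusterShift_add (v := v) hwE
  rw [hwL] at this
  exact (mem_filter_subset_emFinset_iff hE').2
    ⟨length_clusterShift.trans hwL, by omega, aboveCluster_clusterShift hwE⟩

theorem card_filter_subset_emFinset_eq {u v : Word} (hlen : u.length = v.length) {L h : ℕ}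
    {E : Finset ℕ} (hE : E ⊆ Icc 1 (L + 1 - u.length))
    (hht : ht (extCluster u E L) = ht (extCluster v E L)) :
    #{w ∈ words L h | E ⊆ emFinset u w} = #{w ∈ words L h | E ⊆ emFinset v w} := by
  have hE' : E ⊆ Icc 1 (L + 1 - v.length) := hlen ▸ hE
  refine card_bij' (fun w _ => clusterShift u v E w) (fun w _ => clusterShift v u E w)
    (fun w => clusterShift_mem_filter_subset_emFinset hE hE' hht)
    (fun w => clusterShift_mem_filter_subset_emFinset hE' hE hht.symm) (fun w hw => ?_)
    (fun w hw => ?_)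
  · exact clusterShift_clusterShift ((mem_filter_subset_emFinset_iff hE).1 hw).2.2
  · exact clusterShift_clusterShift ((mem_filter_subset_emFinset_iff hE').1 hw).2.2

lemma card_filter_subset_emFinset_eq_sum {z : Word} {n : ℕ} (hz : z.length = n) (L h : ℕ)
    (S : Finset ℕ) :
    #{w ∈ words L h | S ⊆ emFinset z w} =
      ∑ T ∈ (Icc 1 (L + 1 - n)).powerset with S ⊆ T, #{w ∈ words L h | emFinset z w = T} := by
  rw [card_eq_sum_card_fiberwise (f := emFinset z) fun w hw => ?_]
  · refine sum_congr rfl fun T hT => ?_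
    rw [filter_filter]
    refine congrArg card (filter_congr fun w _ => ⟨fun h => h.2, fun h => ⟨?_, h⟩⟩)
    exact h ▸ (mem_filter.1 hT).2
  · simp only [coe_filter, Set.mem_ofPred_eq, mem_powerset, mem_words] at hw ⊢
    exact ⟨hw.1.1 ▸ hz ▸ emFinset_subset z w, hw.2⟩

theorem eq_of_sum_superset_eq {α M : Type*} [DecidableEq α] [AddCancelCommMonoid M]
    {U : Finset α} {f g : Finset α → M}
    (h : ∀ S ⊆ U, ∑ T ∈ U.powerset with S ⊆ T, f T = ∑ T ∈ U.powerset with S ⊆ T, g T)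
    {S : Finset α} (hS : S ⊆ U) : f S = g S := by
  refine strongDownwardInductionOn (p := fun S => S ⊆ U → f S = g S) S
    (fun S ih _ hS => ?_) (card_le_card hS) hS
  have hmem : S ∈ {T ∈ U.powerset | S ⊆ T} := mem_filter.2 ⟨mem_powerset.2 hS, subset_rfl⟩
  have hrest : ∑ T ∈ {T ∈ U.powerset | S ⊆ T}.erase S, f T =
      ∑ T ∈ {T ∈ U.powerset | S ⊆ T}.erase S, g T := by
    refine sum_congr rfl fun T hT => ?_
    obtain ⟨hTS, hT⟩ := mem_erase.1 hT
    obtain ⟨hTU, hST⟩ := mem_filter.1 hT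
    exact ih (card_le_card (mem_powerset.1 hTU)) (ssubset_of_subset_of_ne hST hTS.symm)
      (mem_powerset.1 hTU)
  have := h S hS
  rw [← add_sum_erase _ _ hmem, ← add_sum_erase _ _ hmem, hrest] at this
  exact add_right_cancel this

theorem sswilf_of_card_filter_emFinset_eq {u v : Word}
    (hcard : ∀ L h S, #{w ∈ words L h | emFinset u w = S} = #{w ∈ words L h | emFinset v w = S}) :
    SSWilf u v := by
  let key (z w : Word) : ℕ × ℕ × Finset ℕ := (w.length, ht w, emFinset z w)
  have mem_fiber (z : Word) (c : ℕ × ℕ × Finset ℕ) (w : Word) :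
      w ∈ {w ∈ words c.1 c.2.1 | emFinset z w = c.2.2} ↔ key z w = c := by
    obtain ⟨L, h, S⟩ := c
    simp [key, mem_words, and_assoc]
  let e (c : ℕ × ℕ × Finset ℕ) : {w // key u w = c} ≃ {w // key v w = c} :=
    (Equiv.subtypeEquivRight (mem_fiber u c)).symm.trans <|
      (equivOfCardEq (hcard c.1 c.2.1 c.2.2)).trans (Equiv.subtypeEquivRight (mem_fiber v c))
  have hkey (w : Word) := Equiv.ofFiberEquiv_map e w
  simp only [key, Prod.mk.injEq] at hkey
  refine ⟨Equiv.ofFiberEquiv e, (Equiv.ofFiberEquiv e).bijective,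
    fun w => ⟨(hkey w).1, (hkey w).2.1⟩, fun w => ?_⟩
  rw [← coe_emFinset, ← coe_emFinset, (hkey w).2.2]

theorem sswilf_of_ht_extCluster_eq {u v : Word} (hlen : u.length = v.length)
    (hht : ∀ L E, E ⊆ Icc 1 (L + 1 - u.length) → ht (extCluster u E L) = ht (extCluster v E L)) :
    SSWilf u v := by
  refine sswilf_of_card_filter_emFinset_eq fun L h S => ?_
  by_cases hS : S ⊆ Icc 1 (L + 1 - u.length)
  · refine eq_of_sum_superset_eq (f := fun T => #{w ∈ words L h | emFinset u w = T})
      (g := fun T => #{w ∈ words L h | emFinset v w = T}) (fun T hT => ?_) hS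
    rw [← card_filter_subset_emFinset_eq_sum rfl L h T,
      ← card_filter_subset_emFinset_eq_sum hlen.symm L h T]
    exact card_filter_subset_emFinset_eq hlen hT (hht L T hT)
  · have hzero (z : Word) (hz : z.length = u.length) : #{w ∈ words L h | emFinset z w = S} = 0 :=
      card_eq_zero.2 <| filter_eq_empty_iff.2 fun w hw hwS => hS <| by
        rw [← hwS, ← hz, ← (mem_words.1 hw).1]
        exact emFinset_subset z w
    rw [hzero u rfl, hzero v hlen.symm]

lemma filter_le_clusterAt_add_one {u : Word} {E : Finset ℕ} {L i : ℕ} (hi : 2 ≤ i)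
    (hE : E ⊆ Icc 1 (L + 1 - u.length)) :
    {k ∈ range L | i ≤ (clusterAt u E (k + 1) : ℕ)} + {1} = posGe u i + E := by
  ext x
  simp only [mem_add, mem_filter, mem_range, mem_singleton, le_clusterAt_iff hi, posGe]
  constructor
  · rintro ⟨k, ⟨hk, a, ha, h1, h2, h3⟩, _, rfl, rfl⟩
    exact ⟨k + 1 - a, ⟨by omega, h3⟩, a, ha, by omega⟩
  · rintro ⟨j, ⟨hj, hij⟩, a, ha, rfl⟩
    have := mem_Icc.1 (hE ha)
    refine ⟨j + a - 1, ⟨by omega, a, ha, by omega, by omega, ?_⟩, 1, rfl, by omega⟩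
    rwa [show j + a - 1 + 1 - a = j by omega]

lemma clusterAt_eq_one_add_card {u : Word} {n : ℕ} (hu : ∀ a ∈ u, (a : ℕ) ≤ n)
    (E : Finset ℕ) (p : ℕ) :
    (clusterAt u E p : ℕ) = 1 + #{i ∈ Icc 2 n | i ≤ (clusterAt u E p : ℕ)} := by
  have hle : clusterAt u E p ≤ (max 1 n).toPNat' := clusterAt_le_iff.2 fun a _ h1 h2 => by
    rw [← PNat.coe_le_coe, Nat.toPNat'_coe, if_pos (by omega), List.getD_eq_getElem _ _ (by omega)]
    exact (hu _ (List.getElem_mem _)).trans (le_max_right 1 n)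
  rw [← PNat.coe_le_coe, Nat.toPNat'_coe, if_pos (by omega)] at hle
  have := (clusterAt u E p).pos
  rw [show {i ∈ Icc 2 n | i ≤ (clusterAt u E p : ℕ)} = Icc 2 (clusterAt u E p : ℕ) by
    ext i; simp only [mem_filter, mem_Icc]; omega, Nat.card_Icc]
  omega

theorem ht_extCluster_eq {u : Word} {n L : ℕ} {E : Finset ℕ} (hu : ∀ a ∈ u, (a : ℕ) ≤ n)
    (hE : E ⊆ Icc 1 (L + 1 - u.length)) :
    ht (extCluster u E L) = L + ∑ i ∈ Icc 2 n, #(posGe u i + E) := by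
  rw [ht_extCluster, sum_congr rfl fun k _ => clusterAt_eq_one_add_card hu E (k + 1),
    sum_add_distrib, sum_const, card_range, smul_eq_mul, mul_one]
  congr 1
  simp only [card_filter]
  rw [sum_comm]
  refine sum_congr rfl fun i hi => ?_
  rw [← card_filter, ← card_add_singleton _ 1,
    filter_le_clusterAt_add_one (mem_Icc.1 hi).1 hE]

lemma card_add_add_singleton (P F : Finset ℕ) (a : ℕ) : #(P + (F + {a})) = #(P + F) := by
  rw [← add_assoc, card_add_singleton]

theorem sum_card_posGe_add_eq_of_sswilf {n : ℕ} {u v : Word} (hu : IsPerm n u) (hv : IsPerm n v)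
    (h : SSWilf u v) {F : Finset ℕ} (hF : F ⊆ range n) :
    ∑ i ∈ Icc 2 n, #(posGe u i + F) = ∑ i ∈ Icc 2 n, #(posGe v i + F) := by
  have hE : F + {1} ⊆ Icc 1 (2 * n + 1 - u.length) := by
    intro x hx
    simp only [mem_add, mem_singleton, exists_eq_left] at hx
    obtain ⟨f, hf, rfl⟩ := hx
    have := mem_range.1 (hF hf)
    rw [hu.1, mem_Icc]
    omega
  have := ht_extCluster_eq_of_sswilf (hu.1.trans hv.1.symm) h hE
  rw [ht_extCluster_eq (fun _ => hu.coe_le) hE,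
    ht_extCluster_eq (fun _ => hv.coe_le) (by rw [hu.1] at hE; rwa [hv.1])] at this
  simpa only [card_add_add_singleton, add_right_inj] using this

lemma isEmbSet_of_subset {n : ℕ} {E : Finset ℕ} (h1 : 1 ∈ E) (hE : E ⊆ Icc 1 n) :
    IsEmbSet n E := by
  refine ⟨h1, fun a ha => (mem_Icc.1 (hE ha)).1, fun a ha => ?_⟩
  by_cases hmax : ∀ b ∈ E, b ≤ a
  · exact Or.inl hmax
  · push Not at hmax
    obtain ⟨b, hb, hab⟩ := hmax
    have := mem_Icc.1 (hE ha)
    have := mem_Icc.1 (hE hb)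
    exact Or.inr ⟨b, hb, hab, by omega⟩

def interCard (n : ℕ) (u : Word) (i : ℕ) (E : Finset ℕ) : ℕ :=
  #(shiftSet (pos u i) E ∩ (Icc (i + 1) n).biUnion fun j => shiftSet (pos u j) E)

lemma IsPerm.interCard_add_card_posGe_add {n : ℕ} {u : Word} (hu : IsPerm n u) {i : ℕ}
    (hi : 1 ≤ i) (hin : i ≤ n) (E : Finset ℕ) :
    interCard n u i E + #(posGe u i + E) = #E + #(posGe u (i + 1) + E) := by
  rw [interCard, hu.biUnion_shiftSet_pos (by omega), shiftSet_eq, hu.posGe_eq_insert hi hin,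
    insert_eq, union_add, add_comm, card_union_add_card_inter, card_singleton_add]

theorem card_posGe_add_eq_of_interCard_eq {n : ℕ} {u v : Word} (hu : IsPerm n u)
    (hv : IsPerm n v) {E : Finset ℕ}
    (hrule : ∀ i, 1 ≤ i → i ≤ n - 1 → interCard n u i E = interCard n v i E) {i : ℕ}
    (hi : 1 ≤ i) (hin : i ≤ n + 1) : #(posGe u i + E) = #(posGe v i + E) := by
  refine Nat.decreasingInduction (motive := fun i _ => 1 ≤ i → #(posGe u i + E) = #(posGe v i + E))
    (fun i hin ih hi => ?_) (fun _ => ?_) hin hi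
  · have hu' := hu.interCard_add_card_posGe_add hi (by omega) E
    have hv' := hv.interCard_add_card_posGe_add hi (by omega) E
    have hcross : interCard n u i E = interCard n v i E := by
      rcases Nat.lt_or_ge i n with h | h
      · exact hrule i hi (by omega)
      · simp [interCard, Icc_eq_empty_of_lt (show n < i + 1 by omega)]
    have := ih (by omega)
    omega
  · rw [hu.posGe_eq_empty (by omega), hv.posGe_eq_empty (by omega)]

theorem sum_card_posGe_add_eq_of_interCard_eq {n : ℕ} {u v : Word} (hu : IsPerm n u)
    (hv : IsPerm n v)
    (hrule : ∀ i, 1 ≤ i → i ≤ n - 1 → ∀ E, IsEmbSet n E → interCard n u i E = interCard n v i E)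
    {F : Finset ℕ} (hF : F ⊆ range n) :
    ∑ i ∈ Icc 2 n, #(posGe u i + F) = ∑ i ∈ Icc 2 n, #(posGe v i + F) := by
  obtain rfl | hne := F.eq_empty_or_nonempty
  · simp
  -- shift `F` so that its least element becomes `1`, which makes it an embedding set
  set m := F.min' hne
  set E := F.image (· - m + 1)
  have hmF : ∀ f ∈ F, m ≤ f := fun f hf => min'_le F f hf
  have hFE : F + {1} = E + {m} := by
    ext x
    simp only [E, mem_add, mem_image, mem_singleton, exists_eq_left, exists_exists_and_eq_and]
    exact exists_congr fun f => and_congr_right fun hf => by have := hmF f hf; omega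
  have hE : IsEmbSet n E := by
    refine isEmbSet_of_subset (mem_image.2 ⟨m, min'_mem F hne, by omega⟩) fun e he => ?_
    obtain ⟨f, hf, rfl⟩ := mem_image.1 he
    have := mem_range.1 (hF hf)
    exact mem_Icc.2 ⟨by omega, by omega⟩
  refine sum_congr rfl fun i hi => ?_
  have := mem_Icc.1 hi
  rw [add_comm (posGe u i), add_comm (posGe v i), card_add_eq_of_add_singleton_eq hFE,
    card_add_eq_of_add_singleton_eq hFE, add_comm E, add_comm E]
  exact card_posGe_add_eq_of_interCard_eq hu hv (fun j hj hjn => hrule j hj hjn E hE)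
    (by omega) (by omega)

theorem isTranslate_posGe_of_sum_card_eq {n : ℕ} {u v : Word} (hu : IsPerm n u)
    (hv : IsPerm n v)
    (h : ∀ F ⊆ range n, ∑ i ∈ Icc 2 n, #(posGe u i + F) = ∑ i ∈ Icc 2 n, #(posGe v i + F))
    (i : ℕ) : IsTranslate (posGe u i) (posGe v i) := by
  by_cases hi : i ∈ Icc 2 n
  · refine isTranslate_of_sum_card_inf'_eq (N := n) (fun j _ => hu.1 ▸ posGe_subset_range u j)
      (fun j hj => ?_) (fun j hj k hk hjk => ?_) (fun G hGN hG => ?_) i hi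
    · have := mem_Icc.1 hj
      rw [hu.card_posGe (by omega), hv.card_posGe (by omega)]
    · have := mem_Icc.1 hj
      have := mem_Icc.1 hk
      rw [hu.card_posGe (by omega), hu.card_posGe (by omega)]
      omega
    · exact sum_card_inf'_eq_of_sum_card_biUnion_eq
        (fun F hF _ => by simpa only [← add_eq_biUnion] using h F hF) hGN hG
  · have : posGe u i = posGe v i := by
      rw [mem_Icc, not_and_or, not_le, not_le] at hi
      rcases hi with hi | hi
      · rw [posGe_of_le_one u (by omega), posGe_of_le_one v (by omega), hu.1, hv.1]
      · rw [hu.posGe_eq_empty hi, hv.posGe_eq_empty hi]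
    exact ⟨0, 0, by rw [this]⟩

theorem interCard_eq_of_isTranslate {n : ℕ} {u v : Word} (hu : IsPerm n u) (hv : IsPerm n v)
    (htr : ∀ i, IsTranslate (posGe u i) (posGe v i)) {i : ℕ} (hi : 1 ≤ i) (hin : i ≤ n - 1)
    (E : Finset ℕ) : interCard n u i E = interCard n v i E := by
  have hu' := hu.interCard_add_card_posGe_add hi (by omega) E
  have hv' := hv.interCard_add_card_posGe_add hi (by omega) E
  obtain ⟨a, b, hab⟩ := htr i
  obtain ⟨c, d, hcd⟩ := htr (i + 1)
  rw [card_add_eq_of_add_singleton_eq hab, card_add_eq_of_add_singleton_eq hcd] at hu'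
  omega

theorem sswilf_of_isTranslate {n : ℕ} {u v : Word} (hu : IsPerm n u) (hv : IsPerm n v)
    (htr : ∀ i, IsTranslate (posGe u i) (posGe v i)) : SSWilf u v := by
  refine sswilf_of_ht_extCluster_eq (hu.1.trans hv.1.symm) fun L E hE => ?_
  rw [ht_extCluster_eq (fun _ => hu.coe_le) hE,
    ht_extCluster_eq (fun _ => hv.coe_le) (by rw [hu.1] at hE; rwa [hv.1])]
  refine congrArg (L + ·) (sum_congr rfl fun i _ => ?_)
  obtain ⟨a, b, hab⟩ := htr i
  exact card_add_eq_of_add_singleton_eq hab E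

/-- intersection rule: `u ∼ₛₛ v` iff for each `i ∈ [n-1]` and
every embedding set `E`, `|s̄ᵢ ∩ ⋃_{j>i} s̄ⱼ| = |t̄ᵢ ∩ ⋃_{j>i} t̄ⱼ|`. -/
theorem sswilf_iff_intersection_rule (n : ℕ) (u v : Word)
    (hu : IsPerm n u) (hv : IsPerm n v) :
    SSWilf u v ↔
      ∀ i, 1 ≤ i → i ≤ n - 1 → ∀ E : Finset ℕ, IsEmbSet n E →
        (shiftSet (pos u i) E ∩
            (Finset.Icc (i + 1) n).biUnion (fun j => shiftSet (pos u j) E)).card =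
        (shiftSet (pos v i) E ∩
            (Finset.Icc (i + 1) n).biUnion (fun j => shiftSet (pos v j) E)).card := by
  constructor
  · intro h i hi hin E _
    exact interCard_eq_of_isTranslate hu hv (isTranslate_posGe_of_sum_card_eq hu hv
      fun F hF => sum_card_posGe_add_eq_of_sswilf hu hv h hF) hi hin E
  · intro hrule
    exact sswilf_of_isTranslate hu hv (isTranslate_posGe_of_sum_card_eq hu hv
      fun F hF => sum_card_posGe_add_eq_of_interCard_eq hu hv hrule hF)
end

section
/- The permutations 213 and 312 are super-strongly Wilf equivalent. -/
/-!
Since the middle letter `1` of both patterns imposes nothing, `j ∈ Em(213, w)` means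
`w_j ≥ 2 ∧ w_{j+2} ≥ 3` and `j ∈ Em(312, w)` means `w_j ≥ 3 ∧ w_{j+2} ≥ 2`. Both conditions only
compare letters in positions of the same parity, so it suffices to treat the two parity classes of
`w` separately: we need a bijection `g`, permuting the letters of every word, with
`x_i ≥ 2 ∧ x_{i+1} ≥ 3 ↔ (g x)_i ≥ 3 ∧ (g x)_{i+1} ≥ 2`. Rotating every maximal block of letters
`≥ 2` one step to the left works: inside a block `b_1 … b_k` the left condition holds at `i` iff
`i < k` and `b_{i+1} ≥ 3`, and the rotated block carries `b_{i+1}` at position `i`.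
-/

namespace List

variable {α : Type*}

def deinterleave : List α → List α × List α
  | [] => ([], [])
  | a :: l => (a :: l.deinterleave.2, l.deinterleave.1)

@[simp] lemma deinterleave_nil : ([] : List α).deinterleave = ([], []) := rfl

@[simp] lemma deinterleave_cons (a : α) (l : List α) :
    (a :: l).deinterleave = (a :: l.deinterleave.2, l.deinterleave.1) := rfl

lemma interleave_deinterleave (l : List α) : l.deinterleave.1.interleave l.deinterleave.2 = l := by
  induction l with
  | nil => simp
  | cons a l ih => simp [ih]

lemma length_deinterleave (l : List α) :
    l.deinterleave.2.length ≤ l.deinterleave.1.length ∧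
      l.deinterleave.1.length ≤ l.deinterleave.2.length + 1 := by
  induction l with
  | nil => simp
  | cons a l ih =>
    simp only [deinterleave_cons, length_cons, add_le_add_iff_right]
    omega

lemma deinterleave_interleave :
    ∀ {l₁ l₂ : List α}, l₂.length ≤ l₁.length → l₁.length ≤ l₂.length + 1 →
      (l₁.interleave l₂).deinterleave = (l₁, l₂)
  | [], [], _, _ => by simp
  | [], _ :: _, h₂₁, _ => by simp at h₂₁
  | a :: l₁, l₂, h₂₁, h₁₂ => by
    simp only [length_cons] at h₂₁ h₁₂
    simp [deinterleave_interleave (l₁ := l₂) (l₂ := l₁) (by omega) (by omega)]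
termination_by l₁ l₂ => l₁.length + l₂.length

lemma getD_deinterleave (l : List α) (i : ℕ) (d : α) :
    l.deinterleave.1.getD i d = l.getD (2 * i) d ∧
      l.deinterleave.2.getD i d = l.getD (2 * i + 1) d := by
  induction l generalizing i with
  | nil => simp
  | cons a l ih =>
    cases i with
    | zero => simp only [deinterleave_cons, getD_cons_zero, Nat.mul_zero, true_and]; exact (ih 0).1
    | succ i =>
      simp only [deinterleave_cons, getD_cons_succ, Nat.mul_succ]
      exact ⟨(ih i).2, (ih (i + 1)).1⟩

def onParityClasses (g : List α → List α) (l : List α) : List α :=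
  (g l.deinterleave.1).interleave (g l.deinterleave.2)

section onParityClasses

variable {g g' : List α → List α}

lemma onParityClasses_perm (hg : ∀ l, g l ~ l) (l : List α) : l.onParityClasses g ~ l := by
  conv_rhs => rw [← interleave_deinterleave l]
  exact (hg _).interleave (hg _)

lemma deinterleave_onParityClasses (hg : ∀ l, (g l).length = l.length) (l : List α) :
    (l.onParityClasses g).deinterleave = (g l.deinterleave.1, g l.deinterleave.2) := by
  obtain ⟨h₂₁, h₁₂⟩ := length_deinterleave l
  exact deinterleave_interleave (by simpa [hg] using h₂₁) (by simpa [hg] using h₁₂)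

lemma leftInverse_onParityClasses (hg : ∀ l, (g l).length = l.length)
    (h : Function.LeftInverse g' g) :
    Function.LeftInverse (onParityClasses g') (onParityClasses g) := fun l => by
  rw [onParityClasses, deinterleave_onParityClasses hg, h, h, interleave_deinterleave]

lemma bijective_onParityClasses (hg : Function.Bijective g) (hlen : ∀ l, (g l).length = l.length) :
    Function.Bijective (onParityClasses g) := by
  obtain ⟨g', hg'g, hgg'⟩ := Function.bijective_iff_has_inverse.1 hg
  have hlen' : ∀ l, (g' l).length = l.length := fun l => by rw [← hlen, hgg']
  exact Function.bijective_iff_has_inverse.2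
    ⟨onParityClasses g', leftInverse_onParityClasses hlen hg'g,
      leftInverse_onParityClasses hlen' hgg'⟩

lemma getD_onParityClasses_iff (hlen : ∀ l, (g l).length = l.length) {d : α} {R R' : α → α → Prop}
    (hg : ∀ l i, R (l.getD i d) (l.getD (i + 1) d) ↔ R' ((g l).getD i d) ((g l).getD (i + 1) d))
    (l : List α) (a : ℕ) :
    R (l.getD a d) (l.getD (a + 2) d) ↔
      R' ((l.onParityClasses g).getD a d) ((l.onParityClasses g).getD (a + 2) d) := by
  have hd := deinterleave_onParityClasses hlen l
  obtain ⟨i, rfl | rfl⟩ := Nat.even_or_odd' a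
  · rw [show 2 * i + 2 = 2 * (i + 1) by ring]
    simp only [← (getD_deinterleave _ _ d).1, hd]
    exact hg _ i
  · rw [show 2 * i + 1 + 2 = 2 * (i + 1) + 1 by ring]
    simp only [← (getD_deinterleave _ _ d).2, hd]
    exact hg _ i

end onParityClasses

lemma leftInverse_rotate_length_sub_one :
    Function.LeftInverse (fun p : List α => p.rotate (p.length - 1)) (·.rotate 1) := fun p => by
  rcases p with _ | ⟨a, p⟩
  · simp
  · simp only [length_rotate, rotate_rotate, length_cons, Nat.add_sub_cancel]
    rw [Nat.add_comm, ← length_cons, rotate_length]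

lemma rightInverse_rotate_length_sub_one :
    Function.RightInverse (fun p : List α => p.rotate (p.length - 1)) (·.rotate 1) := fun p => by
  rcases p with _ | ⟨a, p⟩
  · simp
  · simp only [rotate_rotate, length_cons, Nat.add_sub_cancel]
    rw [← length_cons, rotate_length]

variable [DecidableEq α] (s : α)

def mapRuns (g : List α → List α) (l : List α) : List α :=
  [s].intercalate ((l.splitOn s).map g)

-- Moves the first letter of each maximal `s`-free block to the end of that block.
def rotateRuns : List α → List α
  | [] => []
  | [a] => [a]
  | a :: b :: l =>
    if a = s then a :: rotateRuns (b :: l)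
    else if b = s then a :: b :: rotateRuns l
    else b :: rotateRuns (a :: l)
termination_by l => l.length

variable {s}

lemma not_mem_of_mem_splitOn {l p : List α} (hp : p ∈ l.splitOn s) : s ∉ p := by
  induction l generalizing p with
  | nil => simp_all
  | cons a l ih =>
    obtain ⟨q, qs, hl⟩ := exists_cons_of_ne_nil (splitOn_ne_nil s l)
    rw [splitOn_cons_eq_if_modifyHead, hl] at hp
    have hq : s ∉ q := ih (by simp [hl])
    have hqs : ∀ p ∈ qs, s ∉ p := fun p hp => ih (by simp [hl, hp])
    by_cases ha : a = s
    · simp only [ha, beq_self_eq_true, if_true, mem_cons] at hp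
      rcases hp with rfl | rfl | hp
      exacts [not_mem_nil, hq, hqs p hp]
    · simp only [beq_iff_eq, ha, if_false, modifyHead_cons, mem_cons] at hp
      rcases hp with rfl | hp
      exacts [by simp [Ne.symm ha, hq], hqs p hp]

lemma leftInverse_mapRuns {g g' : List α → List α} (hg : ∀ p, s ∉ p → s ∉ g p)
    (h : Function.LeftInverse g' g) : Function.LeftInverse (mapRuns s g') (mapRuns s g) := fun l => by
  have hfree : ∀ q ∈ (l.splitOn s).map g, s ∉ q := by
    simp only [mem_map, forall_exists_index, and_imp, forall_apply_eq_imp_iff₂]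
    exact fun p hp => hg p (not_mem_of_mem_splitOn hp)
  rw [mapRuns, mapRuns, splitOn_intercalate s hfree (by simp), map_map, h.comp_eq_id, map_id,
    intercalate_splitOn]

lemma rotateRuns_sep_cons (l : List α) : rotateRuns s (s :: l) = s :: rotateRuns s l := by
  cases l <;> simp [rotateRuns]

lemma rotateRuns_cons_sep_cons {a : α} (ha : a ≠ s) (l : List α) :
    rotateRuns s (a :: s :: l) = a :: s :: rotateRuns s l := by
  simp [rotateRuns, ha]

lemma rotateRuns_cons_cons {a b : α} (ha : a ≠ s) (hb : b ≠ s) (l : List α) :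
    rotateRuns s (a :: b :: l) = b :: rotateRuns s (a :: l) := by
  simp [rotateRuns, ha, hb]

lemma mapRuns_sep_cons {g : List α → List α} (hg : g [] = []) (l : List α) :
    mapRuns s g (s :: l) = s :: mapRuns s g l := by
  rw [mapRuns, splitOn_cons_eq_if_modifyHead, if_pos (beq_self_eq_true s), map_cons, hg,
    intercalate_cons_of_ne_nil (by simp)]
  rfl

lemma rotateRuns_eq_mapRuns (l : List α) : rotateRuns s l = mapRuns s (·.rotate 1) l := by
  induction l using rotateRuns.induct s with
  | case1 => simp [rotateRuns, mapRuns]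
  | case2 a => by_cases ha : a = s <;> simp [rotateRuns, mapRuns, splitOn_cons_eq_if_modifyHead, ha]
  | case3 b l ih =>
    rw [rotateRuns_sep_cons, ih, mapRuns_sep_cons]
    rfl
  | case4 a l ha ih =>
    rw [rotateRuns_cons_sep_cons ha, ih]
    simp [mapRuns, splitOn_cons_eq_if_modifyHead, intercalate_cons_of_ne_nil, ha]
  | case5 a b l ha hb ih =>
    rw [rotateRuns_cons_cons ha hb, ih]
    obtain ⟨p, ps, hl⟩ := exists_cons_of_ne_nil (splitOn_ne_nil s l)
    simp [mapRuns, splitOn_cons_eq_if_modifyHead, ha, hb, hl, rotate_cons_succ]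

lemma bijective_rotateRuns : Function.Bijective (rotateRuns s) := by
  have hfree : ∀ n, ∀ p : List α, s ∉ p → s ∉ p.rotate n := fun n p hp => by rwa [mem_rotate]
  refine Function.bijective_iff_has_inverse.2
    ⟨mapRuns s fun p => p.rotate (p.length - 1), fun l => ?_, fun l => ?_⟩
  · rw [funext rotateRuns_eq_mapRuns]
    exact leftInverse_mapRuns (hfree 1) leftInverse_rotate_length_sub_one l
  · rw [funext rotateRuns_eq_mapRuns]
    exact leftInverse_mapRuns (fun p => hfree _ p) rightInverse_rotate_length_sub_one l

lemma rotateRuns_perm (l : List α) : rotateRuns s l ~ l := by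
  induction l using rotateRuns.induct s with
  | case1 => simp [rotateRuns]
  | case2 a => simp [rotateRuns]
  | case3 b l ih => rw [rotateRuns_sep_cons]; exact ih.cons s
  | case4 a l ha ih => rw [rotateRuns_cons_sep_cons ha]; exact (ih.cons s).cons a
  | case5 a b l ha hb ih => rw [rotateRuns_cons_cons ha hb]; exact (ih.cons b).trans (Perm.swap a b l)

lemma getD_rotateRuns_eq_sep_iff (l : List α) (i : ℕ) :
    (rotateRuns s l).getD i s = s ↔ l.getD i s = s := by
  induction l using rotateRuns.induct s generalizing i with
  | case1 => simp [rotateRuns]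
  | case2 a => simp [rotateRuns]
  | case3 b l ih =>
    rw [rotateRuns_sep_cons]
    cases i
    · simp
    · exact ih _
  | case4 a l ha ih =>
    rw [rotateRuns_cons_sep_cons ha]
    rcases i with _ | _ | i
    · simp
    · simp
    · exact ih _
  | case5 a b l ha hb ih =>
    rw [rotateRuns_cons_cons ha hb]
    rcases i with _ | _ | i
    · simp [ha, hb]
    · simpa [ha, hb] using ih 0
    · exact ih (i + 1)

lemma getD_rotateRuns_of_ne {l : List α} {i : ℕ} (hi : l.getD i s ≠ s)
    (hi' : l.getD (i + 1) s ≠ s) : (rotateRuns s l).getD i s = l.getD (i + 1) s := by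
  induction l using rotateRuns.induct s generalizing i with
  | case1 => simp at hi
  | case2 a => simp at hi'
  | case3 b l ih =>
    rw [rotateRuns_sep_cons]
    cases i
    · simp at hi
    · exact ih hi hi'
  | case4 a l ha ih =>
    rw [rotateRuns_cons_sep_cons ha]
    rcases i with _ | _ | i
    · simp at hi'
    · simp at hi
    · exact ih hi hi'
  | case5 a b l ha hb ih =>
    rw [rotateRuns_cons_cons ha hb]
    rcases i with _ | _ | i
    · rfl
    · exact ih ha hi'
    · exact ih hi hi'

lemma getD_rotateRuns_pattern_iff {P : α → Prop} (hP : ¬P s) (l : List α) (i : ℕ) :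
    (l.getD i s ≠ s ∧ P (l.getD (i + 1) s)) ↔
      (P ((rotateRuns s l).getD i s) ∧ (rotateRuns s l).getD (i + 1) s ≠ s) := by
  rw [Ne, Ne, getD_rotateRuns_eq_sep_iff]
  constructor
  · rintro ⟨hi, hPi⟩
    have hi' : l.getD (i + 1) s ≠ s := fun h => hP (h ▸ hPi)
    exact ⟨getD_rotateRuns_of_ne hi hi' ▸ hPi, hi'⟩
  · rintro ⟨hPi, hi'⟩
    have hi : l.getD i s ≠ s := by
      rw [Ne, ← getD_rotateRuns_eq_sep_iff]
      exact fun h => hP (h ▸ hPi)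
    exact ⟨hi, getD_rotateRuns_of_ne hi hi' ▸ hPi⟩

end List

lemma PNat.two_le_iff_ne_one (x : ℕ+) : 2 ≤ x ↔ x ≠ 1 := by
  rw [← PNat.coe_le_coe, Ne, ← PNat.coe_eq_one_iff]
  have := x.pos
  simp only [PNat.val_ofNat]
  omega

-- The coercion in `ht` elaborates through the list monad, as a `flatMap`.
lemma List.Perm.ht_eq {w w' : Word} (h : w.Perm w') : ht w = ht w' :=
  ((h.flatMap_right _).map _).sum_eq

lemma Em_eq_Em_of_getD_iff {a b c d : ℕ+} {w w' : Word} (hlen : w'.length = w.length)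
    (h : ∀ i, (a ≤ w.getD i 1 ∧ b ≤ w.getD (i + 2) 1) ↔ (c ≤ w'.getD i 1 ∧ d ≤ w'.getD (i + 2) 1)) :
    Em [a, 1, b] w = Em [c, 1, d] w' := by
  have hthree : ∀ (x y : ℕ+) (v : Word) (m : ℕ),
      (∀ k < 3, [x, 1, y].getD k 1 ≤ v.getD (m + k) 1) ↔ (x ≤ v.getD m 1 ∧ y ≤ v.getD (m + 2) 1) := by
    intro x y v m
    simp only [Nat.forall_lt_succ_right, Nat.not_lt_zero, IsEmpty.forall_iff, forall_const,
      true_and, List.getD_cons_zero, List.getD_cons_succ, add_zero, one_le, and_true]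
  ext j
  simp only [Em, Set.mem_ofPred_eq, List.length_cons, List.length_nil, hlen, hthree, h]

lemma two_le_and_three_le_iff_rotateRuns (l : Word) (i : ℕ) :
    (2 ≤ l.getD i 1 ∧ 3 ≤ l.getD (i + 1) 1) ↔
      (3 ≤ (l.rotateRuns 1).getD i 1 ∧ 2 ≤ (l.rotateRuns 1).getD (i + 1) 1) := by
  simpa only [PNat.two_le_iff_ne_one] using
    List.getD_rotateRuns_pattern_iff (P := (3 ≤ ·)) (by decide) l i

/-- `213 ∼ₛₛ 312`. -/
theorem sswilf_213_312 : SSWilf [2, 1, 3] [3, 1, 2] := by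
  have hlen : ∀ l : Word, (l.rotateRuns 1).length = l.length :=
    fun l => (List.rotateRuns_perm l).length_eq
  have hperm : ∀ w : Word, (w.onParityClasses (List.rotateRuns 1)).Perm w :=
    List.onParityClasses_perm List.rotateRuns_perm
  refine ⟨List.onParityClasses (List.rotateRuns 1),
    List.bijective_onParityClasses List.bijective_rotateRuns hlen,
    fun w => ⟨(hperm w).length_eq, (hperm w).ht_eq⟩,
    fun w => Em_eq_Em_of_getD_iff (hperm w).length_eq ?_⟩
  exact List.getD_onParityClasses_iff (R := fun x y => 2 ≤ x ∧ 3 ≤ y)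
    (R' := fun x y => 3 ≤ x ∧ 2 ≤ y) hlen two_le_and_three_le_iff_rotateRuns w
end

section
/- Let m ≤ n and let i₁ < … < i_m and j₁ < … < j_m be indices in [n] with i₁ ≤ j₁, with consecutive differences d_l = i_{l+1} − i_l and f_l = j_{l+1} − j_l. Then the equality |ī₁ ∩ ī₂ ∩ … ∩ ī_m| = |j̄₁ ∩ j̄₂ ∩ … ∩ j̄_m| holds for every embedding set E (where p̄ = (p−1)+E) if and only if (d₁, …, d_{m−1}) = (f₁, …, f_{m−1}). -/
/-
If the consecutive differences agree, then `j = i + c` pointwise, and every intersection of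
shifts `(j l - 1) + E` is the translate by `c` of the corresponding intersection for `i`.
Conversely, take for `E` the mirror image `{i_max - i_l + 1}` of the indices `i`: the shifts of
`E` by the `i_l` meet only in `i_max`, so the shifts by the `j_l` meet in exactly one point `x`.
Each `j_l` then matches some `i_{g l}` via `x + i_{g l} = j_l + i_max`; the map `g` is strictly
monotone, hence the identity, so `j - i` is constant.
-/

open Finset

section ShiftIntersection

variable {ι : Type*} [Fintype ι] (hι : (univ : Finset ι).Nonempty)

theorem mem_inf'_shiftSet (p : ι → ℕ) (E : Finset ℕ) (x : ℕ) :
    x ∈ univ.inf' hι (fun l => shiftSet (p l) E) ↔ ∀ l, ∃ e ∈ E, p l - 1 + e = x := by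
  simp [shiftSet]

theorem inf'_shiftSet_add (p : ι → ℕ) (hp : ∀ l, 1 ≤ p l) (c : ℕ) (E : Finset ℕ) :
    univ.inf' hι (fun l => shiftSet (p l + c) E) =
      (univ.inf' hι (fun l => shiftSet (p l) E)).map (addRightEmbedding c) := by
  ext x
  simp only [mem_map, addRightEmbedding_apply, mem_inf'_shiftSet]
  constructor
  · intro hx
    obtain ⟨l₀⟩ := hι
    obtain ⟨e₀, -, hx₀⟩ := hx l₀
    have := hp l₀
    refine ⟨x - c, fun l => ?_, by omega⟩
    obtain ⟨e, he, hex⟩ := hx l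
    have := hp l
    exact ⟨e, he, by omega⟩
  · rintro ⟨y, hy, rfl⟩ l
    obtain ⟨e, he, hey⟩ := hy l
    have := hp l
    exact ⟨e, he, by omega⟩

end ShiftIntersection

section MirrorSet

variable {ι : Type*} [Fintype ι]

def mirrorSet (p : ι → ℕ) (a : ι) : Finset ℕ :=
  univ.image fun l => p a - p l + 1

theorem mem_mirrorSet {p : ι → ℕ} {a : ι} {e : ℕ} :
    e ∈ mirrorSet p a ↔ ∃ l, p a - p l + 1 = e := by
  simp [mirrorSet]

theorem one_mem_mirrorSet (p : ι → ℕ) (a : ι) : 1 ∈ mirrorSet p a :=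
  mem_mirrorSet.2 ⟨a, by simp⟩

theorem one_le_of_mem_mirrorSet {p : ι → ℕ} {a : ι} {e : ℕ} (he : e ∈ mirrorSet p a) : 1 ≤ e := by
  obtain ⟨l, rfl⟩ := mem_mirrorSet.1 he
  omega

variable (hι : (univ : Finset ι).Nonempty)

theorem inf'_shiftSet_mirrorSet {p : ι → ℕ} (hp : ∀ l, 1 ≤ p l) {a : ι} (ha : ∀ l, p l ≤ p a) :
    univ.inf' hι (fun l => shiftSet (p l) (mirrorSet p a)) = {p a} := by
  ext x
  rw [mem_inf'_shiftSet, mem_singleton]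
  constructor
  · intro hx
    obtain ⟨b, -, hb⟩ := univ.exists_min_image p hι
    obtain ⟨e, he, hex⟩ := hx a
    obtain ⟨e', he', hex'⟩ := hx b
    obtain ⟨l, rfl⟩ := mem_mirrorSet.1 he'
    have := one_le_of_mem_mirrorSet he
    have := hb l (mem_univ l)
    have := ha l
    have := hp b
    omega
  · rintro rfl l
    have := hp l
    have := ha l
    exact ⟨p a - p l + 1, mem_mirrorSet.2 ⟨l, rfl⟩, by omega⟩

theorem add_eq_add_of_mem_inf'_shiftSet_mirrorSet [LinearOrder ι] {i j : ι → ℕ}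
    (hi : StrictMono i) (hj : StrictMono j) (hj1 : ∀ l, 1 ≤ j l) {a : ι} (ha : ∀ l, i l ≤ i a)
    {x : ℕ} (hx : x ∈ univ.inf' hι (fun l => shiftSet (j l) (mirrorSet i a))) (l : ι) :
    x + i l = j l + i a := by
  have hmatch : ∀ l, ∃ l', x + i l' = j l + i a := by
    intro l
    obtain ⟨e, he, hex⟩ := (mem_inf'_shiftSet hι _ _ _).1 hx l
    obtain ⟨l', rfl⟩ := mem_mirrorSet.1 he
    have := hj1 l
    have := ha l'
    exact ⟨l', by omega⟩
  choose g hg using hmatch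
  have hg_mono : StrictMono g := fun l₁ l₂ h12 => by
    have := hj h12
    have := hg l₁
    have := hg l₂
    exact hi.lt_iff_lt.1 (by omega)
  simpa [hg_mono.apply_eq] using hg l

end MirrorSet

theorem add_eq_add_of_sub_eq {m : ℕ} (hm1 : 1 ≤ m) {i j : Fin m → ℕ}
    (hi : Monotone i) (hj : Monotone j)
    (hd : ∀ k : ℕ, ∀ h : k + 1 < m,
      i ⟨k + 1, h⟩ - i ⟨k, by omega⟩ = j ⟨k + 1, h⟩ - j ⟨k, by omega⟩) (l : Fin m) :
    j l + i ⟨0, hm1⟩ = i l + j ⟨0, hm1⟩ := by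
  obtain ⟨k, hk⟩ := l
  induction k with
  | zero => exact add_comm _ _
  | succ k ih =>
    have := ih (by omega)
    have := hd k hk
    have hstep : (⟨k, by omega⟩ : Fin m) ≤ ⟨k + 1, hk⟩ := Fin.mk_le_mk.2 k.le_succ
    have := hi hstep
    have := hj hstep
    omega

/-- for strictly increasing index sequences `i₁<…<i_m`,
`j₁<…<j_m` in `[n]` with `i₁ ≤ j₁`, the shifted intersections have equal
cardinality for every embedding set `E` iff the consecutive differences
coincide. -/
theorem inter_card_eq_iff_differences_eq (n m : ℕ) (hm1 : 1 ≤ m)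
    (i j : Fin m → ℕ) (hi : StrictMono i) (hj : StrictMono j)
    (hiR : ∀ l, 1 ≤ i l ∧ i l ≤ n) (hjR : ∀ l, 1 ≤ j l ∧ j l ≤ n)
    (h0 : i ⟨0, hm1⟩ ≤ j ⟨0, hm1⟩) :
    (∀ E : Finset ℕ, 1 ∈ E → (∀ e ∈ E, 1 ≤ e) →
        (Finset.inf' Finset.univ ⟨⟨0, hm1⟩, Finset.mem_univ _⟩
            (fun l => shiftSet (i l) E)).card =
        (Finset.inf' Finset.univ ⟨⟨0, hm1⟩, Finset.mem_univ _⟩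
            (fun l => shiftSet (j l) E)).card)
    ↔ ∀ k : ℕ, ∀ h : k + 1 < m,
        i ⟨k + 1, h⟩ - i ⟨k, by omega⟩ = j ⟨k + 1, h⟩ - j ⟨k, by omega⟩ := by
  have hι : (univ : Finset (Fin m)).Nonempty := ⟨⟨0, hm1⟩, mem_univ _⟩
  constructor
  · intro hcard k hk
    obtain ⟨a, -, ha⟩ := univ.exists_max_image i hι
    have ha : ∀ l, i l ≤ i a := fun l => ha l (mem_univ l)
    have hcard_j := hcard (mirrorSet i a) (one_mem_mirrorSet i a) fun _ => one_le_of_mem_mirrorSet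
    rw [inf'_shiftSet_mirrorSet hι (fun l => (hiR l).1) ha, card_singleton] at hcard_j
    obtain ⟨x, hx⟩ := card_eq_one.1 hcard_j.symm
    have hxij := add_eq_add_of_mem_inf'_shiftSet_mirrorSet hι hi hj (fun l => (hjR l).1)
      ha (hx ▸ mem_singleton_self x)
    have := hxij ⟨k + 1, hk⟩
    have := hxij ⟨k, by omega⟩
    omega
  · intro hd E _ _
    obtain ⟨c, hc⟩ : ∃ c, ∀ l, j l = i l + c := ⟨j ⟨0, hm1⟩ - i ⟨0, hm1⟩, fun l => by
      have := add_eq_add_of_sub_eq hm1 hi.monotone hj.monotone hd l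
      omega⟩
    simp only [hc, inf'_shiftSet_add hι i (fun l => (hiR l).1), card_map]
end
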